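/- arXiv:0911.0140 — 9 statements merged into one kernel-verified Lean document; each statement's English description precedes it below -/
import Mathlib

section
/- If C = k(k+1)/2 + r with k ≥ 1 and 0 ≤ r ≤ k, then (k + r/(k+1))² < 2C; in integer form, ((k+1)k + r)² < 2C(k+1)². -/
theorem Nat.two_mul_triangle_add (k r : ℕ) : 2 * (k * (k + 1) / 2 + r) = k * (k + 1) + 2 * r := by
  rw [mul_add, Nat.two_mul_div_two_of_even (Nat.even_mul_succ_self k)]

/-- The difference of the two sides is `k (k + 1)² + 2 r (k + 1) - r²`, positive as `r ≤ k`. -/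
theorem Nat.sq_succ_mul_add_lt {k r : ℕ} (hk : 1 ≤ k) (hr : r ≤ k) :
    ((k + 1) * k + r) ^ 2 < (k * (k + 1) + 2 * r) * (k + 1) ^ 2 := by
  nlinarith [Nat.mul_le_mul hr hr]

theorem add_div_sq_lt_iff {K : Type*} [Field K] [LinearOrder K] [IsStrictOrderedRing K]
    {a b c d : K} (hd : 0 < d) : (a + b / d) ^ 2 < c ↔ (d * a + b) ^ 2 < c * d ^ 2 := by
  rw [add_div' _ _ _ hd.ne', div_pow, div_lt_iff₀ (by positivity), mul_comm a]

theorem stmt_1 (C k r : ℕ) (hk : 1 ≤ k) (hr : r ≤ k)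
    (hC : C = k * (k + 1) / 2 + r) :
    ((k : ℚ) + (r : ℚ) / (k + 1)) ^ 2 < 2 * C ∧
      ((k + 1) * k + r) ^ 2 < 2 * C * (k + 1) ^ 2 := by
  have hnat : ((k + 1) * k + r) ^ 2 < 2 * C * (k + 1) ^ 2 := by
    rw [hC, Nat.two_mul_triangle_add]
    exact Nat.sq_succ_mul_add_lt hk hr
  refine ⟨?_, hnat⟩
  rw [add_div_sq_lt_iff (by positivity)]
  exact_mod_cast hnat
end

section
/- If N ≡ 0 (mod 4) and for each i ∈ {0,…,N/2−1} exactly one of the two diametrical requests (i, i+N/2) or (i+N/2, i) is chosen and routed clockwise along a half-cycle, then some arc of the directed cycle C⃗_N receives load at least N/4 + 1 from these N/2 diametrical requests. -/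
/-- The load induced on the arc of the directed cycle `C⃗_p` going from `t` to `t+1`
by a set `S` of requests, each request `(i,j)` being routed clockwise from `i` to `j`. -/
def cload (p : ℕ) (S : Finset (ZMod p × ZMod p)) (t : ZMod p) : ℕ :=
  (S.filter fun a => (t - a.1).val < (a.2 - a.1).val).card

theorem stmt_4 (N : ℕ) (hN : 0 < N) (h4 : N % 4 = 0)
    (D : Finset (ZMod N × ZMod N))
    (hD1 : ∀ a ∈ D, a.2 = a.1 + ((N / 2 : ℕ) : ZMod N))
    (hD2 : ∀ i : ZMod N,
      (((i, i + ((N / 2 : ℕ) : ZMod N)) ∈ D)) ≠ (((i + ((N / 2 : ℕ) : ZMod N), i) ∈ D))) :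
    ∃ t : ZMod N, N / 4 + 1 ≤ cload N D t := by
  haveI : NeZero N := ⟨hN.ne'⟩
  set H : ℕ := N / 2 with hHdef
  set Hc : ZMod N := ((H : ℕ) : ZMod N) with hHc
  have hN4 : 4 ≤ N := by omega
  have hHN : H < N := by omega
  have hH2 : H + H = N := by omega
  have hH1 : 1 ≤ H := by omega
  have hvalHc : Hc.val = H := ZMod.val_cast_of_lt hHN
  have hHc0 : Hc + Hc = 0 := by
    rw [hHc, ← Nat.cast_add, hH2, ZMod.natCast_self]
  -- the set of chosen starting points
  set S : Finset (ZMod N) := D.image Prod.fst with hS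
  have memS : ∀ i : ZMod N, i ∈ S ↔ (i, i + Hc) ∈ D := by
    intro i
    constructor
    · intro hi
      obtain ⟨a, ha, rfl⟩ := Finset.mem_image.mp hi
      have := hD1 a ha
      rwa [← this]
    · intro hi
      exact Finset.mem_image.mpr ⟨_, hi, rfl⟩
  -- choose u with (u, u+Hc) ∈ D
  have hu : ∃ u : ZMod N, u ∈ S := by
    have h := hD2 0
    by_cases h0 : (0, 0 + Hc) ∈ D
    · exact ⟨0, (memS 0).mpr h0⟩
    · have h1 : (0 + Hc, 0) ∈ D := by
        by_contra hc
        exact h (by rw [eq_iff_iff]; exact iff_of_false h0 hc)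
      refine ⟨0 + Hc, (memS _).mpr ?_⟩
      rwa [add_assoc, hHc0, add_zero]
  obtain ⟨u, huS⟩ := hu
  have huD : (u, u + Hc) ∈ D := (memS u).mp huS
  have huH : u + Hc ∉ S := by
    intro hmem
    have h2 : (u + Hc, u + Hc + Hc) ∈ D := (memS _).mp hmem
    rw [add_assoc, hHc0, add_zero] at h2
    exact (hD2 u) (by simp [huD, h2])
  -- cardinality of S is at least H
  have hScard : H ≤ S.card := by
    have hsub : (Finset.univ : Finset (ZMod N)) ⊆ S ∪ S.image (· + Hc) := by
      intro i _
      have h := hD2 i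
      by_cases h0 : (i, i + Hc) ∈ D
      · exact Finset.mem_union_left _ ((memS i).mpr h0)
      · have h1 : (i + Hc, i) ∈ D := by
          by_contra hc
          exact h (by rw [eq_iff_iff]; exact iff_of_false h0 hc)
        have h2 : (i + Hc) ∈ S := by
          rw [memS]
          rwa [add_assoc, hHc0, add_zero]
        refine Finset.mem_union_right _ (Finset.mem_image.mpr ⟨i + Hc, h2, ?_⟩)
        rw [add_assoc, hHc0, add_zero]
    have hcard : N ≤ S.card + S.card := by
      calc N = (Finset.univ : Finset (ZMod N)).card := by
              rw [Finset.card_univ, ZMod.card]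
        _ ≤ (S ∪ S.image (· + Hc)).card := Finset.card_le_card hsub
        _ ≤ S.card + (S.image (· + Hc)).card := Finset.card_union_le _ _
        _ ≤ S.card + S.card := Nat.add_le_add_left Finset.card_image_le _
    omega
  -- rewrite cload in terms of S
  have hinj : Set.InjOn Prod.fst (D : Set (ZMod N × ZMod N)) := by
    intro a ha b hb hab
    have h1 := hD1 a ha
    have h2 := hD1 b hb
    exact Prod.ext hab (by rw [h1, h2, hab])
  have hcload : ∀ t : ZMod N, cload N D t = (S.filter fun s => (t - s).val < H).card := by
    intro t
    unfold cload
    have e1 : D.filter (fun a => (t - a.1).val < (a.2 - a.1).val)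
        = D.filter (fun a => (t - a.1).val < H) := by
      apply Finset.filter_congr
      intro a ha
      have := hD1 a ha
      simp only [this, add_sub_cancel_left, hvalHc]
    have e2 : S.filter (fun s => (t - s).val < H)
        = (D.filter fun a => (t - a.1).val < H).image Prod.fst := by
      rw [hS]; exact Finset.filter_image
    rw [e1, e2,
      Finset.card_image_of_injOn (hinj.mono (Finset.coe_subset.mpr (Finset.filter_subset _ _)))]
  -- the two key arcs
  set A : Finset (ZMod N) := S.filter (fun s => (u - s).val < H) with hA
  set B : Finset (ZMod N) := S.filter (fun s => (u + Hc - 1 - s).val < H) with hB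
  -- u is in both A and B
  have huA : u ∈ A := by
    rw [hA, Finset.mem_filter]
    refine ⟨huS, ?_⟩
    simp only [sub_self, ZMod.val_zero]
    omega
  have huB : u ∈ B := by
    rw [hB, Finset.mem_filter]
    refine ⟨huS, ?_⟩
    have : u + Hc - 1 - u = ((H - 1 : ℕ) : ZMod N) := by
      push_cast [Nat.cast_sub hH1]
      ring
    rw [this, ZMod.val_cast_of_lt (by omega)]
    omega
  -- A ∪ B = S
  have hAB : A ∪ B = S := by
    apply Finset.Subset.antisymm
    · exact Finset.union_subset (Finset.filter_subset _ _) (Finset.filter_subset _ _)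
    · intro s hs
      have hsne : s ≠ u + Hc := fun h => huH (h ▸ hs)
      set v : ℕ := (u - s).val with hv
      by_cases hcase : v < H
      · exact Finset.mem_union_left _ (Finset.mem_filter.mpr ⟨hs, hcase⟩)
      · have hvlt : v < N := ZMod.val_lt _
        have hvne : v ≠ H := by
          intro he
          apply hsne
          have h1 : u - s = Hc := by
            have : ((v : ℕ) : ZMod N) = u - s := by
              rw [hv, ZMod.natCast_val, ZMod.cast_id]
            rw [← this, he]
          have : s = u - Hc := by rw [← h1]; ring
          rw [this, sub_eq_iff_eq_add, add_assoc, hHc0, add_zero]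
        have hvge : H + 1 ≤ v := by omega
        -- show s ∈ B
        refine Finset.mem_union_right _ (Finset.mem_filter.mpr ⟨hs, ?_⟩)
        have key : u + Hc - 1 - s = ((v + H - 1 - N : ℕ) : ZMod N) := by
          have h1 : u + Hc - 1 - s = (u - s) + Hc - 1 := by ring
          have h2 : u - s = ((v : ℕ) : ZMod N) := by
            rw [hv, ZMod.natCast_val, ZMod.cast_id]
          rw [h1, h2, hHc]
          have h3 : ((v + H - 1 - N : ℕ) : ZMod N) = ((v + H - 1 : ℕ) : ZMod N) := by
            have h4 : ((v + H - 1 - N : ℕ) : ZMod N) + ((N : ℕ) : ZMod N)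
                = ((v + H - 1 : ℕ) : ZMod N) := by
              rw [← Nat.cast_add]; congr 1; omega
            rwa [ZMod.natCast_self, add_zero] at h4
          rw [h3, Nat.cast_sub (by omega), Nat.cast_add]
          push_cast
          ring
        rw [key, ZMod.val_cast_of_lt (by omega)]
        omega
  -- conclude
  have hsum : S.card + 1 ≤ cload N D u + cload N D (u + Hc - 1) := by
    rw [hcload u, hcload (u + Hc - 1), ← hA, ← hB]
    have h1 : A.card + B.card = (A ∪ B).card + (A ∩ B).card :=
      (Finset.card_union_add_card_inter A B).symm
    have h2 : 1 ≤ (A ∩ B).card :=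
      Finset.card_pos.mpr ⟨u, Finset.mem_inter.mpr ⟨huA, huB⟩⟩
    rw [hAB] at h1
    omega
  by_contra hcon
  push_neg at hcon
  have c1 := hcon u
  have c2 := hcon (u + Hc - 1)
  omega
end

section
/- Let C = k(k+1)/2 + r with 0 ≤ r ≤ k, and let H be a digraph on vertex set Z_p whose arcs are routed clockwise via shortest directed paths on the cycle C⃗_p, with the load of every cycle-arc at most C. If γ denotes the number of arcs of H, then γ ≤ kp + rp/(k+1), i.e., (k+1)γ ≤ (k(k+1)+r)p. -/
open Finset

theorem ZMod.card_filter_val_sub_lt {p : ℕ} [NeZero p] (x : ZMod p) {n : ℕ} (hn : n ≤ p) :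
    #{t : ZMod p | (t - x).val < n} = n := by
  rw [← card_range n]
  refine card_nbij' (fun t => (t - x).val) (fun j => (j : ZMod p) + x) ?_ ?_ ?_ ?_
  · intro t ht
    simpa using ht
  · intro j hj
    have hj : j < n := by simpa using hj
    simpa [ZMod.val_natCast_of_lt (hj.trans_le hn)] using hj
  · intro t _
    simp
  · intro j hj
    have hj : j < n := by simpa using hj
    simp [ZMod.val_natCast_of_lt (hj.trans_le hn)]

theorem sum_Icc_succ_sub (k : ℕ) : ∑ i ∈ Icc 1 k, (k + 1 - i) = k * (k + 1) / 2 := by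
  have hreflect : ∑ i ∈ Icc 1 k, (k + 1 - i) = ∑ i ∈ range (k + 1), i := by
    rw [← Ico_add_one_right_eq_Icc, sum_Ico_reflect (fun i => i) 1 (k + 1).le_succ, range_eq_Ico,
      sum_eq_sum_Ico_succ_bot k.succ_pos]
    simp
  rw [hreflect, sum_range_id, Nat.add_sub_cancel, mul_comm]

section FiberBound

variable {α : Type*} (S : Finset α) (ℓ : α → ℕ) {p : ℕ} (k : ℕ)

theorem sum_succ_sub_le_of_card_fiber_le (hpos : ∀ a ∈ S, 1 ≤ ℓ a)
    (hfiber : ∀ i, #{a ∈ S | ℓ a = i} ≤ p) :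
    ∑ a ∈ S, (k + 1 - ℓ a) ≤ k * (k + 1) / 2 * p := by
  have hmaps : ∀ a ∈ S.filter (ℓ · ≤ k), ℓ a ∈ Icc 1 k := fun a ha => by
    rw [mem_filter] at ha
    exact mem_Icc.mpr ⟨hpos a ha.1, ha.2⟩
  have hfiber' (i : ℕ) : #{a ∈ S.filter (ℓ · ≤ k) | ℓ a = i} ≤ p :=
    (card_le_card (filter_subset_filter _ (filter_subset _ _))).trans (hfiber i)
  calc ∑ a ∈ S, (k + 1 - ℓ a)
      = ∑ a ∈ S.filter (ℓ · ≤ k), (k + 1 - ℓ a) :=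
        (sum_filter_of_ne fun a _ ha => by omega).symm
    _ = ∑ i ∈ Icc 1 k, ∑ a ∈ S.filter (ℓ · ≤ k) with ℓ a = i, (k + 1 - ℓ a) :=
        (sum_fiberwise_of_maps_to hmaps _).symm
    _ = ∑ i ∈ Icc 1 k, #{a ∈ S.filter (ℓ · ≤ k) | ℓ a = i} * (k + 1 - i) := by
        refine sum_congr rfl fun i _ => ?_
        rw [sum_congr rfl fun a ha => by rw [(mem_filter.mp ha).2], sum_const, smul_eq_mul]
    _ ≤ ∑ i ∈ Icc 1 k, p * (k + 1 - i) :=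
        sum_le_sum fun i _ => Nat.mul_le_mul_right _ (hfiber' i)
    _ = k * (k + 1) / 2 * p := by rw [← mul_sum, sum_Icc_succ_sub, mul_comm]

theorem succ_mul_card_le_of_card_fiber_le (hpos : ∀ a ∈ S, 1 ≤ ℓ a)
    (hfiber : ∀ i, #{a ∈ S | ℓ a = i} ≤ p) :
    (k + 1) * #S ≤ k * (k + 1) / 2 * p + ∑ a ∈ S, ℓ a :=
  calc (k + 1) * #S = ∑ _a ∈ S, (k + 1) := by rw [sum_const, smul_eq_mul, mul_comm]
    _ ≤ ∑ a ∈ S, ((k + 1 - ℓ a) + ℓ a) := sum_le_sum fun a _ => by omega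
    _ ≤ k * (k + 1) / 2 * p + ∑ a ∈ S, ℓ a := by
        rw [sum_add_distrib]
        exact Nat.add_le_add_right (sum_succ_sub_le_of_card_fiber_le S ℓ k hpos hfiber) _

end FiberBound

def arcLength {p : ℕ} (a : ZMod p × ZMod p) : ℕ := (a.2 - a.1).val

theorem one_le_arcLength {p : ℕ} {a : ZMod p × ZMod p} (ha : a.1 ≠ a.2) : 1 ≤ arcLength a :=
  Nat.one_le_iff_ne_zero.mpr fun h => ha (sub_eq_zero.mp ((ZMod.val_eq_zero _).mp h)).symm

section Cycle

variable {p : ℕ} [NeZero p]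

theorem card_filter_arcLength_eq_le (S : Finset (ZMod p × ZMod p)) (i : ℕ) :
    #{a ∈ S | arcLength a = i} ≤ p := by
  have hinj : Set.InjOn Prod.fst (S.filter (arcLength · = i) : Set (ZMod p × ZMod p)) := by
    intro a ha b hb hfst
    have hlen : a.2 - a.1 = b.2 - b.1 :=
      ZMod.val_injective p ((mem_filter.mp ha).2.trans (mem_filter.mp hb).2.symm)
    exact Prod.ext hfst (by simpa [hfst] using hlen)
  simpa using card_le_card_of_injOn Prod.fst (fun _ _ => mem_coe.mpr (mem_univ _)) hinj

theorem sum_cload_eq_sum_arcLength (S : Finset (ZMod p × ZMod p)) :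
    ∑ t, cload p S t = ∑ a ∈ S, arcLength a := by
  simp only [cload, card_filter]
  rw [sum_comm]
  refine sum_congr rfl fun a _ => ?_
  rw [← card_filter]
  exact ZMod.card_filter_val_sub_lt a.1 (ZMod.val_lt _).le

theorem sum_arcLength_le_of_cload_le {S : Finset (ZMod p × ZMod p)} {C : ℕ}
    (hload : ∀ t, cload p S t ≤ C) : ∑ a ∈ S, arcLength a ≤ C * p := by
  rw [← sum_cload_eq_sum_arcLength]
  simpa [mul_comm] using sum_le_sum fun t (_ : t ∈ univ) => hload t

end Cycle

theorem stmt_5_general (p C k r : ℕ) (hp : 0 < p)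
    (hC : C = k * (k + 1) / 2 + r)
    (S : Finset (ZMod p × ZMod p))
    (hS : ∀ a ∈ S, a.1 ≠ a.2)
    (hload : ∀ t : ZMod p, cload p S t ≤ C) :
    (k + 1) * S.card ≤ (k * (k + 1) + r) * p := by
  have : NeZero p := ⟨hp.ne'⟩
  have hhalf : 2 * (k * (k + 1) / 2) = k * (k + 1) :=
    Nat.two_mul_div_two_of_even (Nat.even_mul_succ_self k)
  calc (k + 1) * #S
      ≤ k * (k + 1) / 2 * p + ∑ a ∈ S, arcLength a :=
        succ_mul_card_le_of_card_fiber_le S arcLength k (fun a ha => one_le_arcLength (hS a ha))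
          (card_filter_arcLength_eq_le S)
    _ ≤ k * (k + 1) / 2 * p + C * p := Nat.add_le_add_left (sum_arcLength_le_of_cload_le hload) _
    _ = (k * (k + 1) + r) * p := by rw [hC, ← add_mul]; congr 1; omega

theorem stmt_5 (p C k r : ℕ) (hp : 0 < p) (hr : r ≤ k)
    (hC : C = k * (k + 1) / 2 + r)
    (S : Finset (ZMod p × ZMod p))
    (hS : ∀ a ∈ S, a.1 ≠ a.2)
    (hload : ∀ t : ZMod p, cload p S t ≤ C) :
    (k + 1) * S.card ≤ (k * (k + 1) + r) * p :=
  stmt_5_general p C k r hp hC S hS hload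
end

section
/- If p ≤ 2k+1, then the full tournament T_p (all arcs (i,j) with clockwise distance from i to j at most p/2, routed via shortest paths on C⃗_p) induces load at most k(k+1)/2 on every arc of the cycle C⃗_p; consequently γ(k(k+1)/2, p) = p(p−1)/2 for p ≤ 2k+1. -/
/-- `gamma C p` is the maximum number of arcs of a (loopless, oriented) digraph on `Z_p`,
arcs routed clockwise on the cycle `C⃗_p`, whose load on every cycle-arc is at most `C`. -/
noncomputable def gamma (C p : ℕ) : ℕ :=
  sSup {n : ℕ | ∃ S : Finset (ZMod p × ZMod p),
    (∀ a ∈ S, a.1 ≠ a.2) ∧ (∀ a ∈ S, (a.2, a.1) ∉ S) ∧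
    (∀ t : ZMod p, cload p S t ≤ C) ∧ S.card = n}

open Finset

section Orientation

variable {α : Type*} [DecidableEq α] {S : Finset (α × α)}

lemma card_union_image_swap (hanti : ∀ a ∈ S, (a.2, a.1) ∉ S) :
    #(S ∪ S.image Prod.swap) = 2 * #S := by
  have hdisj : Disjoint S (S.image Prod.swap) := by
    rw [disjoint_left]
    intro a ha ha'
    obtain ⟨b, hb, rfl⟩ := mem_image.mp ha'
    exact hanti b hb ha
  rw [card_union_of_disjoint hdisj, card_image_of_injective _ Prod.swap_injective, two_mul]

variable [Fintype α]

lemma union_image_swap_subset_offDiag (hloop : ∀ a ∈ S, a.1 ≠ a.2) :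
    S ∪ S.image Prod.swap ⊆ (univ : Finset α).offDiag := by
  intro a ha
  rcases mem_union.mp ha with ha | ha
  · simpa using hloop a ha
  · obtain ⟨b, hb, rfl⟩ := mem_image.mp ha
    simpa using (hloop b hb).symm

lemma two_mul_card_le_card_offDiag (hloop : ∀ a ∈ S, a.1 ≠ a.2)
    (hanti : ∀ a ∈ S, (a.2, a.1) ∉ S) :
    2 * #S ≤ #(univ : Finset α).offDiag :=
  card_union_image_swap hanti ▸ card_le_card (union_image_swap_subset_offDiag hloop)

lemma two_mul_card_eq_card_offDiag (hloop : ∀ a ∈ S, a.1 ≠ a.2)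
    (htour : ∀ i j : α, i ≠ j → ((i, j) ∈ S ↔ (j, i) ∉ S)) :
    2 * #S = #(univ : Finset α).offDiag := by
  have hanti : ∀ a ∈ S, (a.2, a.1) ∉ S := fun a ha => (htour a.1 a.2 (hloop a ha)).mp ha
  have hcover : (univ : Finset α).offDiag ⊆ S ∪ S.image Prod.swap := by
    rintro ⟨i, j⟩ hij
    have hij : i ≠ j := (mem_offDiag.mp hij).2.2
    by_cases h : (i, j) ∈ S
    · exact mem_union_left _ h
    · exact mem_union_right _ (mem_image.mpr ⟨(j, i), by_contra fun hji =>
        h ((htour i j hij).mpr hji), rfl⟩)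
  rw [← card_union_image_swap hanti,
    (union_image_swap_subset_offDiag hloop).antisymm hcover]

end Orientation

lemma card_offDiag_zmod (p : ℕ) [NeZero p] :
    #(univ : Finset (ZMod p)).offDiag = p * (p - 1) := by
  rw [offDiag_card, card_univ, ZMod.card, Nat.mul_sub_one]

lemma card_sigma_range_range (n : ℕ) : #((range n).sigma range) = n * (n - 1) / 2 := by
  rw [card_sigma]
  simp only [card_range]
  exact sum_range_id n

lemma cload_le_of_val_sub_le {p : ℕ} [NeZero p] {S : Finset (ZMod p × ZMod p)} {m : ℕ}
    (hlen : ∀ a ∈ S, (a.2 - a.1).val ≤ m) (t : ZMod p) :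
    cload p S t ≤ (m + 1) * m / 2 := by
  have hinj : ∀ a b : ZMod p × ZMod p, (t - a.1).val = (t - b.1).val →
      (a.2 - a.1).val = (b.2 - b.1).val → a = b := by
    intro a b hs hd
    have h1 : a.1 = b.1 := sub_right_injective (ZMod.val_injective p hs)
    have h2 : a.2 - a.1 = b.2 - b.1 := ZMod.val_injective p hd
    rw [h1, sub_left_inj] at h2
    exact Prod.ext h1 h2
  calc cload p S t ≤ #((range (m + 1)).sigma range) := by
        refine card_le_card_of_injOn
          (fun a => (⟨(a.2 - a.1).val, (t - a.1).val⟩ : Σ _ : ℕ, ℕ)) ?_ ?_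
        · intro a ha
          obtain ⟨haS, hlt⟩ := mem_filter.mp ha
          simp only [coe_sigma, Set.mem_sigma_iff, coe_range, Set.mem_Iio]
          exact ⟨Nat.lt_succ_of_le (hlen a haS), hlt⟩
        · intro a _ b _ hab
          simp only [Sigma.mk.injEq, heq_eq_eq] at hab
          exact hinj a b hab.2 hab.1
    _ = (m + 1) * m / 2 := card_sigma_range_range (m + 1)

lemma gamma_eq_of_isTournament {C p : ℕ} [NeZero p] {T : Finset (ZMod p × ZMod p)}
    (hloop : ∀ a ∈ T, a.1 ≠ a.2) (htour : ∀ i j : ZMod p, i ≠ j → ((i, j) ∈ T ↔ (j, i) ∉ T))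
    (hload : ∀ t : ZMod p, cload p T t ≤ C) :
    gamma C p = p * (p - 1) / 2 := by
  refine IsGreatest.csSup_eq ⟨⟨T, hloop, fun a ha => (htour a.1 a.2 (hloop a ha)).mp ha,
    hload, ?_⟩, ?_⟩
  · have := two_mul_card_eq_card_offDiag hloop htour
    rw [card_offDiag_zmod] at this
    omega
  · rintro n ⟨S, hSloop, hSanti, -, rfl⟩
    have := two_mul_card_le_card_offDiag hSloop hSanti
    rw [card_offDiag_zmod] at this
    omega

theorem stmt_8_general (p k : ℕ) (hp2 : 2 ≤ p) (hp : p ≤ 2 * k + 1)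
    (T : Finset (ZMod p × ZMod p))
    (hT1 : ∀ a ∈ T, a.1 ≠ a.2 ∧ 2 * (a.2 - a.1).val ≤ p)
    (hT2 : ∀ i j : ZMod p, i ≠ j → ((i, j) ∈ T ↔ (j, i) ∉ T)) :
    (∀ t : ZMod p, cload p T t ≤ k * (k + 1) / 2) ∧
      gamma (k * (k + 1) / 2) p = p * (p - 1) / 2 := by
  have : NeZero p := ⟨by omega⟩
  have hm : p / 2 ≤ k := by omega
  have hload : ∀ t : ZMod p, cload p T t ≤ k * (k + 1) / 2 := fun t =>
    calc cload p T t ≤ (p / 2 + 1) * (p / 2) / 2 :=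
          cload_le_of_val_sub_le (fun a ha => by have := (hT1 a ha).2; omega) t
      _ ≤ k * (k + 1) / 2 := Nat.div_le_div_right (by rw [mul_comm]; gcongr)
  exact ⟨hload, gamma_eq_of_isTournament (fun a ha => (hT1 a ha).1) hT2 hload⟩

theorem stmt_8 (p k : ℕ) (hk : 1 ≤ k) (hp2 : 2 ≤ p) (hp : p ≤ 2 * k + 1)
    (T : Finset (ZMod p × ZMod p))
    (hT1 : ∀ a ∈ T, a.1 ≠ a.2 ∧ 2 * (a.2 - a.1).val ≤ p)
    (hT2 : ∀ i j : ZMod p, i ≠ j → ((i, j) ∈ T ↔ (j, i) ∉ T)) :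
    (∀ t : ZMod p, cload p T t ≤ k * (k + 1) / 2) ∧
      gamma (k * (k + 1) / 2) p = p * (p - 1) / 2 :=
  stmt_8_general p k hp2 hp T hT1 hT2
end

section
/- Any valid partition with grooming factor C must use at least ⌈(N² + α)/(8C)⌉ subgraphs, where α = −1 if N is odd, α = 4 if N ≡ 2 (mod 4), and α = 8 if N ≡ 0 (mod 4). -/
/-! Every request of `T` is a shortest arc, so its length is the circular distance `|j - i|` of
its ends, and since `T` holds exactly one of `(u, v)`, `(v, u)` for `u ≠ v`, the total load
`∑ₜ load t = ∑_{a ∈ T} len a` is half the sum of all circular distances, `N ⌊N²/4⌋ / 2`. Averaging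
over the `N` arcs gives an arc of load at least `⌊N²/8⌋`. For even `N` the load is not constant:
the loads of the arcs entering and leaving a vertex differ by its out-degree minus its in-degree,
and these two degrees add up to the odd number `N - 1`. So some arc has load `⌊N²/8⌋ + 1`. In
each case this is `(N² + α)/8`, and each of the `W` parts carries at most `C` of it. -/

open Finset

theorem ZMod.sum_comp_val {M : Type*} [AddCommMonoid M] {N : ℕ} [NeZero N] (h : ℕ → M) :
    ∑ d : ZMod N, h d.val = ∑ k ∈ range N, h k := by
  obtain ⟨n, rfl⟩ := Nat.exists_eq_succ_of_ne_zero (NeZero.ne N)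
  exact Fin.sum_univ_eq_sum_range h _

theorem sum_range_min_sub (N : ℕ) : ∑ k ∈ range N, min k (N - k) = N ^ 2 / 4 := by
  induction N using Nat.strong_induction_on with
  | _ N ih =>
    match N with
    | 0 => rfl
    | 1 => rfl
    | n + 2 =>
      have hshift : ∀ k ∈ range n, min (k + 1) (n + 2 - (k + 1)) = min k (n - k) + 1 := by
        intro k hk
        rw [mem_range] at hk
        omega
      rw [sum_range_succ', sum_range_succ, sum_congr rfl hshift, sum_add_distrib,
        ih n (by omega), sum_const, card_range, smul_eq_mul, mul_one]
      have : (n + 2) ^ 2 = n ^ 2 + 4 * n + 4 := by ring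
      omega

theorem ZMod.sum_natAbs_valMinAbs (N : ℕ) [NeZero N] :
    ∑ d : ZMod N, d.valMinAbs.natAbs = N ^ 2 / 4 := by
  simp_rw [ZMod.valMinAbs_natAbs_eq_min]
  exact (ZMod.sum_comp_val fun k => min k (N - k)).trans (sum_range_min_sub N)

theorem ZMod.sum_natAbs_valMinAbs_sub (N : ℕ) [NeZero N] :
    ∑ a : ZMod N × ZMod N, (a.2 - a.1).valMinAbs.natAbs = N * (N ^ 2 / 4) := by
  rw [Fintype.sum_prod_type]
  have hrow (x : ZMod N) : ∑ y : ZMod N, (y - x).valMinAbs.natAbs = N ^ 2 / 4 :=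
    (Fintype.sum_equiv (Equiv.subRight x) _ _ fun _ => rfl).trans (ZMod.sum_natAbs_valMinAbs N)
  simp only [hrow, sum_const, card_univ, ZMod.card, smul_eq_mul]

/-- With `s = t - i` and `d = j - i`, the four terms say whether the clockwise route `i → j`
uses the arcs leaving `t + 1` and `t`, ends at `t + 1`, or starts at `t + 1`. -/
theorem ZMod.ite_val_add_one_lt_add_ite {N : ℕ} [NeZero N] (s d : ZMod N) (hd : d ≠ 0) :
    (if (s + 1).val < d.val then 1 else 0) + (if s + 1 = d then 1 else 0)
      = (if s.val < d.val then 1 else 0) + (if s + 1 = 0 then 1 else 0 : ℕ) := by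
  have : Fact (1 < N) := ⟨by
    have := NeZero.ne N
    have : N ≠ 1 := by rintro rfl; exact hd (Subsingleton.elim _ _)
    omega⟩
  have hval : (s + 1).val = (s.val + 1) % N := by rw [ZMod.val_add, ZMod.val_one]
  simp only [← (ZMod.val_injective N).eq_iff, hval, ZMod.val_zero]
  have := ZMod.val_lt s
  have := ZMod.val_lt d
  have := ZMod.val_pos.2 hd
  obtain h | h : s.val + 1 < N ∨ s.val + 1 = N := by omega
  · have := Nat.mod_eq_of_lt h
    split_ifs <;> omega
  · have : (s.val + 1) % N = 0 := by rw [h, Nat.mod_self]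
    split_ifs <;> omega

theorem Finset.exists_lt_of_sum_le_of_ne {ι M : Type*} [AddCommMonoid M] [LinearOrder M]
    [IsOrderedCancelAddMonoid M] {s : Finset ι} {f : ι → M} {c : M}
    (h : ∑ _i ∈ s, c ≤ ∑ i ∈ s, f i) {i j : ι} (hi : i ∈ s) (hj : j ∈ s) (hij : f i ≠ f j) :
    ∃ k ∈ s, c < f k := by
  by_contra! hle
  have hconst := (sum_eq_sum_iff_of_le hle).1 (le_antisymm (sum_le_sum hle) h)
  exact hij ((hconst i hi).trans (hconst j hj).symm)

theorem Nat.sq_mod_eight (N : ℕ) :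
    N ^ 2 % 8 = if N % 2 = 1 then 1 else if N % 4 = 2 then 4 else 0 := by
  rw [Nat.pow_mod]
  have : N % 8 < 8 := Nat.mod_lt _ (by norm_num)
  interval_cases h : N % 8 <;> split_ifs <;> omega

theorem two_nsmul_sum_of_tournament {α M : Type*} [Fintype α] [DecidableEq α] [AddCommMonoid M]
    (T : Finset (α × α)) (htourn : ∀ u v, u ≠ v → ((u, v) ∈ T ↔ (v, u) ∉ T))
    (g : α × α → M) (hg_swap : ∀ a, g a.swap = g a) (hg_diag : ∀ x, g (x, x) = 0) :
    2 • ∑ a ∈ T, g a = ∑ a, g a := by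
  have hswap : ∑ a ∈ T, g a = ∑ a, if a.swap ∈ T then g a else 0 := by
    rw [← sum_ite_mem_eq]
    exact Fintype.sum_equiv (Equiv.prodComm α α) _ _ fun a => by simp [hg_swap]
  rw [two_nsmul]
  nth_rw 2 [hswap]
  rw [← sum_ite_mem_eq, ← sum_add_distrib]
  refine Fintype.sum_congr _ _ fun ⟨u, v⟩ => ?_
  by_cases huv : u = v
  · subst huv
    simp [hg_diag]
  · by_cases h : (u, v) ∈ T
    · simp [h, (htourn u v huv).1 h]
    · simp [h, not_not.1 (mt (htourn u v huv).2 h)]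

theorem card_filter_fst_add_card_filter_snd {α : Type*} [Fintype α] [DecidableEq α]
    (T : Finset (α × α)) (hirrefl : ∀ a ∈ T, a.1 ≠ a.2)
    (htourn : ∀ u v, u ≠ v → ((u, v) ∈ T ↔ (v, u) ∉ T)) (v : α) :
    #{a ∈ T | a.1 = v} + #{a ∈ T | a.2 = v} = Fintype.card α - 1 := by
  have hout : #{a ∈ T | a.1 = v} = #{u | (v, u) ∈ T} :=
    card_nbij' Prod.snd (Prod.mk v)
      (fun a ha => by obtain ⟨haT, rfl⟩ := mem_filter.1 ha; simpa using haT)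
      (fun u hu => by simpa using hu)
      (fun a ha => by obtain ⟨-, rfl⟩ := mem_filter.1 ha; rfl) (fun _ _ => rfl)
  have hin : #{a ∈ T | a.2 = v} = #{u | (u, v) ∈ T} :=
    card_nbij' Prod.fst (Prod.mk · v)
      (fun a ha => by obtain ⟨haT, rfl⟩ := mem_filter.1 ha; simpa using haT)
      (fun u hu => by simpa using hu)
      (fun a ha => by obtain ⟨-, rfl⟩ := mem_filter.1 ha; rfl) (fun _ _ => rfl)
  have hdisj : Disjoint (α := Finset α) {u | (v, u) ∈ T} {u | (u, v) ∈ T} := by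
    refine disjoint_filter.2 fun u _ hvu huv => ?_
    exact (htourn v u fun h => hirrefl _ hvu h).1 hvu huv
  rw [hout, hin, ← card_union_of_disjoint hdisj, ← filter_or]
  have hne : ∀ u, (v, u) ∈ T ∨ (u, v) ∈ T ↔ u ≠ v := fun u => by
    by_cases huv : u = v
    · subst huv
      simpa using hirrefl (u, u)
    · simpa [huv] using or_iff_not_imp_left.2 (htourn v u (Ne.symm huv)).not_left.1
  simp only [hne, filter_ne', card_erase_of_mem (mem_univ v), card_univ]

theorem cload_biUnion {p : ℕ} {ι : Type*} (s : Finset ι) (B : ι → Finset (ZMod p × ZMod p))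
    (hB : (s : Set ι).PairwiseDisjoint B) (t : ZMod p) :
    cload p (s.biUnion B) t = ∑ i ∈ s, cload p (B i) t := by
  rw [cload, filter_biUnion, card_biUnion fun i hi j hj hij =>
    disjoint_filter_filter (hB hi hj hij)]
  rfl

section Loads

variable {N : ℕ} [NeZero N]

theorem sum_cload (S : Finset (ZMod N × ZMod N)) :
    ∑ t, cload N S t = ∑ a ∈ S, (a.2 - a.1).val := by
  simp only [cload, card_filter]
  rw [sum_comm]
  refine sum_congr rfl fun a _ => ?_
  calc ∑ t : ZMod N, (if (t - a.1).val < (a.2 - a.1).val then 1 else 0)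
      = ∑ s : ZMod N, if s.val < (a.2 - a.1).val then 1 else 0 :=
        Fintype.sum_equiv (Equiv.subRight a.1) _ _ fun _ => rfl
    _ = #{k ∈ range N | k < (a.2 - a.1).val} := by
        rw [ZMod.sum_comp_val fun k => if k < (a.2 - a.1).val then 1 else 0, sum_boole]; rfl
    _ = #(range (a.2 - a.1).val) := by
        congr 1
        ext k
        simp only [mem_filter, mem_range]
        have := ZMod.val_lt (a.2 - a.1)
        omega
    _ = (a.2 - a.1).val := card_range _

theorem cload_succ_add_card_filter_snd (S : Finset (ZMod N × ZMod N))
    (hS : ∀ a ∈ S, a.1 ≠ a.2) (t : ZMod N) :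
    cload N S (t + 1) + #{a ∈ S | a.2 = t + 1} = cload N S t + #{a ∈ S | a.1 = t + 1} := by
  simp only [cload, card_filter, ← sum_add_distrib]
  refine sum_congr rfl fun a ha => ?_
  have hsnd : a.2 = t + 1 ↔ t - a.1 + 1 = a.2 - a.1 := by
    rw [sub_add_eq_add_sub, sub_left_inj, eq_comm]
  have hfst : a.1 = t + 1 ↔ t - a.1 + 1 = 0 := by
    rw [sub_add_eq_add_sub, sub_eq_zero, eq_comm]
  rw [← sub_add_eq_add_sub]
  simp only [hsnd, hfst]
  exact ZMod.ite_val_add_one_lt_add_ite _ _ (sub_ne_zero.2 (hS a ha).symm)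

theorem mem_iff_swap_notMem_of_shortest (T : Finset (ZMod N × ZMod N))
    (hT1 : ∀ a ∈ T, a.1 ≠ a.2 ∧ 2 * (a.2 - a.1).val ≤ N)
    (hT2 : ∀ i j : ZMod N, i ≠ j → 2 * (j - i).val < N → (i, j) ∈ T)
    (hT3 : ∀ i j : ZMod N, 2 * (j - i).val = N → ((i, j) ∈ T ↔ (j, i) ∉ T))
    (u v : ZMod N) (huv : u ≠ v) : (u, v) ∈ T ↔ (v, u) ∉ T := by
  have hsum : (v - u).val + (u - v).val = N := by
    rw [← neg_sub v u, ZMod.neg_val, if_neg (sub_ne_zero.2 huv.symm)]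
    have := ZMod.val_lt (v - u)
    omega
  rcases lt_trichotomy (2 * (v - u).val) N with h | h | h
  · refine iff_of_true (hT2 u v huv h) fun hvu => ?_
    have := (hT1 _ hvu).2
    dsimp only at this
    omega
  · exact hT3 u v h
  · refine iff_of_false (fun huv' => ?_) (not_not.2 (hT2 v u huv.symm (by omega)))
    have := (hT1 _ huv').2
    dsimp only at this
    omega

variable (T : Finset (ZMod N × ZMod N))

theorem two_mul_sum_cload (hshort : ∀ a ∈ T, 2 * (a.2 - a.1).val ≤ N)
    (htourn : ∀ u v, u ≠ v → ((u, v) ∈ T ↔ (v, u) ∉ T)) :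
    2 * ∑ t, cload N T t = N * (N ^ 2 / 4) := by
  have hlen : ∀ a ∈ T, (a.2 - a.1).val = (a.2 - a.1).valMinAbs.natAbs := fun a ha => by
    rw [ZMod.valMinAbs_natAbs_eq_min]
    have := hshort a ha
    omega
  rw [sum_cload, sum_congr rfl hlen, ← smul_eq_mul,
    two_nsmul_sum_of_tournament T htourn (fun a => (a.2 - a.1).valMinAbs.natAbs)
      (fun a => by rw [Prod.fst_swap, Prod.snd_swap, ← neg_sub, ZMod.natAbs_valMinAbs_neg])
      (fun x => by simp),
    ZMod.sum_natAbs_valMinAbs_sub]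

theorem cload_succ_ne_of_even (hN : Even N) (hirrefl : ∀ a ∈ T, a.1 ≠ a.2)
    (htourn : ∀ u v, u ≠ v → ((u, v) ∈ T ↔ (v, u) ∉ T)) (t : ZMod N) :
    cload N T (t + 1) ≠ cload N T t := by
  intro h
  have hstep := cload_succ_add_card_filter_snd T hirrefl t
  have hdeg := card_filter_fst_add_card_filter_snd T hirrefl htourn (t + 1)
  rw [ZMod.card] at hdeg
  have := NeZero.ne N
  obtain ⟨k, hk⟩ := hN
  omega

theorem mul_sq_div_eight_le_sum_cload (hshort : ∀ a ∈ T, 2 * (a.2 - a.1).val ≤ N)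
    (htourn : ∀ u v, u ≠ v → ((u, v) ∈ T ↔ (v, u) ∉ T)) :
    N * (N ^ 2 / 8) ≤ ∑ t, cload N T t := by
  have htotal := two_mul_sum_cload T hshort htourn
  have : N * (2 * (N ^ 2 / 8)) ≤ N * (N ^ 2 / 4) := Nat.mul_le_mul_left N (by omega)
  linarith

theorem exists_sq_div_eight_le_cload (hshort : ∀ a ∈ T, 2 * (a.2 - a.1).val ≤ N)
    (htourn : ∀ u v, u ≠ v → ((u, v) ∈ T ↔ (v, u) ∉ T)) :
    ∃ t, N ^ 2 / 8 ≤ cload N T t := by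
  have hsum : ∑ _t : ZMod N, N ^ 2 / 8 ≤ ∑ t, cload N T t := by
    simpa using mul_sq_div_eight_le_sum_cload T hshort htourn
  obtain ⟨t, -, ht⟩ := exists_le_of_sum_le univ_nonempty hsum
  exact ⟨t, ht⟩

theorem exists_sq_div_eight_lt_cload_of_even (hN : Even N) (hirrefl : ∀ a ∈ T, a.1 ≠ a.2)
    (hshort : ∀ a ∈ T, 2 * (a.2 - a.1).val ≤ N)
    (htourn : ∀ u v, u ≠ v → ((u, v) ∈ T ↔ (v, u) ∉ T)) :
    ∃ t, N ^ 2 / 8 < cload N T t := by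
  have hsum : ∑ _t : ZMod N, N ^ 2 / 8 ≤ ∑ t, cload N T t := by
    simpa using mul_sq_div_eight_le_sum_cload T hshort htourn
  obtain ⟨t, -, ht⟩ := exists_lt_of_sum_le_of_ne hsum (mem_univ _) (mem_univ _)
    (cload_succ_ne_of_even T hN hirrefl htourn 0)
  exact ⟨t, ht⟩

theorem exists_sq_add_le_eight_mul_cload (hT1 : ∀ a ∈ T, a.1 ≠ a.2 ∧ 2 * (a.2 - a.1).val ≤ N)
    (htourn : ∀ u v, u ≠ v → ((u, v) ∈ T ↔ (v, u) ∉ T)) :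
    ∃ t, (N : ℚ) ^ 2 + (if N % 2 = 1 then (-1 : ℚ) else if N % 4 = 2 then 4 else 8)
      ≤ 8 * cload N T t := by
  have hsq := Nat.sq_mod_eight N
  split_ifs at hsq ⊢ with hodd h4
  · obtain ⟨t, ht⟩ := exists_sq_div_eight_le_cload T (fun a ha => (hT1 a ha).2) htourn
    have : N ^ 2 ≤ 8 * cload N T t + 1 := by omega
    have : (N : ℚ) ^ 2 ≤ 8 * cload N T t + 1 := by exact_mod_cast this
    exact ⟨t, by linarith⟩
  all_goals
    obtain ⟨t, ht⟩ := exists_sq_div_eight_lt_cload_of_even T (Nat.even_iff.2 (by omega))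
      (fun a ha => (hT1 a ha).1) (fun a ha => (hT1 a ha).2) htourn
    refine ⟨t, ?_⟩
    norm_cast
    omega

end Loads

theorem stmt_9 (N C W : ℕ) (hN : 2 ≤ N) (hC : 0 < C)
    -- `T` is the tournament of requests: all shortest clockwise arcs, with exactly one
    -- arc chosen per diametrical pair when `N` is even.
    (T : Finset (ZMod N × ZMod N))
    (hT1 : ∀ a ∈ T, a.1 ≠ a.2 ∧ 2 * (a.2 - a.1).val ≤ N)
    (hT2 : ∀ i j : ZMod N, i ≠ j → 2 * (j - i).val < N → (i, j) ∈ T)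
    (hT3 : ∀ i j : ZMod N, 2 * (j - i).val = N → ((i, j) ∈ T ↔ (j, i) ∉ T))
    -- a valid partition of the requests into `W` parts, each of load at most `C`
    (B : Fin W → Finset (ZMod N × ZMod N))
    (hdisj : ∀ w w', w ≠ w' → Disjoint (B w) (B w'))
    (hcover : ∀ a : ZMod N × ZMod N, a ∈ T ↔ ∃ w, a ∈ B w)
    (hload : ∀ w, ∀ t : ZMod N, cload N (B w) t ≤ C) :
    ⌈(((N : ℚ) ^ 2 +
        (if N % 2 = 1 then (-1 : ℚ) else if N % 4 = 2 then 4 else 8)) / (8 * C))⌉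
      ≤ (W : ℤ) := by
  have : NeZero N := ⟨by omega⟩
  obtain ⟨t, ht⟩ := exists_sq_add_le_eight_mul_cload T hT1
    (mem_iff_swap_notMem_of_shortest T hT1 hT2 hT3)
  have hT : T = univ.biUnion B := by
    ext a
    simp [hcover a]
  have hWC : cload N T t ≤ W * C := by
    rw [hT, cload_biUnion _ _ fun w _ w' _ hww' => hdisj w w' hww']
    simpa using sum_le_card_nsmul univ (fun w => cload N (B w) t) C fun w _ => hload w t
  have hWC' : (cload N T t : ℚ) ≤ W * C := by exact_mod_cast hWC
  rw [Int.ceil_le, div_le_iff₀ (by positivity)]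
  push_cast
  linarith
end

section
/- Let C = k(k+1)/2 + r with 0 ≤ r ≤ k, k ≥ 1. Any valid partition of the N(N−1)/2 requests into parts B_1,…,B_W (each part satisfying the load-≤C constraint) uses a total number of vertices A = ∑_ω |V(B_ω)| satisfying A ≥ ⌈(N(N−1)/2)·(k+1)/(k(k+1)+r)⌉. -/
/-- The set of vertices (endpoints of arcs) of a digraph given by its arc set. -/
def verts (p : ℕ) (S : Finset (ZMod p × ZMod p)) : Finset (ZMod p) :=
  S.image Prod.fst ∪ S.image Prod.snd

/-! Fix one part `S` with vertex set `V`. The span `s(a)` of an arc `a` is the number of vertices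
of `V` on its clockwise route, its tail included and its head excluded. Summing the loads over
`V` counts every arc `s(a)` times, so `∑ s(a) ≤ C·|V|`. Arcs with a common tail have distinct
spans, so the deficits `k + 1 - s(a)` of the arcs leaving one vertex add up to at most
`k + (k - 1) + ⋯ + 1`. Hence `(k + 1)·|S| ≤ (C + k(k + 1)/2)·|V| = (k(k + 1) + r)·|V|`, and
summing over the parts, which share out the `N(N - 1)/2` arcs of a tournament, gives the bound. -/

open Finset

lemma sum_tsub_le_of_injOn {ι : Type*} {s : Finset ι} {f : ι → ℕ} (hf : Set.InjOn f s)
    (k : ℕ) : ∑ x ∈ s, (k - f x) ≤ k * (k + 1) / 2 := by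
  calc ∑ x ∈ s, (k - f x) = ∑ j ∈ s.image f, (k - j) := (sum_image hf).symm
    _ = ∑ j ∈ (s.image f).filter (· < k + 1), (k - j) :=
        (sum_filter_of_ne fun j _ hj => by omega).symm
    _ ≤ ∑ j ∈ range (k + 1), (k - j) :=
        sum_le_sum_of_subset fun j hj => mem_range.2 (mem_filter.1 hj).2
    _ = ∑ j ∈ range (k + 1), j := sum_range_reflect id (k + 1)
    _ = k * (k + 1) / 2 := by rw [sum_range_id, Nat.add_sub_cancel, Nat.mul_comm]

lemma sum_succ_tsub_le_of_injOn {ι : Type*} {s : Finset ι} {f : ι → ℕ} (hf : Set.InjOn f s)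
    (hpos : ∀ x ∈ s, 0 < f x) (k : ℕ) :
    ∑ x ∈ s, (k + 1 - f x) ≤ k * (k + 1) / 2 := by
  have hf' : Set.InjOn (fun x => f x - 1) s := fun x hx y hy hxy =>
    hf hx hy (by have := hpos x hx; have := hpos y hy; simp only at hxy; omega)
  calc ∑ x ∈ s, (k + 1 - f x) = ∑ x ∈ s, (k - (f x - 1)) :=
        sum_congr rfl fun x hx => by have := hpos x hx; omega
    _ ≤ k * (k + 1) / 2 := sum_tsub_le_of_injOn hf' k

section Cycle

variable {p : ℕ}

def spanCard (V : Finset (ZMod p)) (a : ZMod p × ZMod p) : ℕ :=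
  #(V.filter fun v => (v - a.1).val < (a.2 - a.1).val)

lemma sum_cload_eq_sum_spanCard (S : Finset (ZMod p × ZMod p)) (V : Finset (ZMod p)) :
    ∑ v ∈ V, cload p S v = ∑ a ∈ S, spanCard V a := by
  simp only [cload, spanCard, card_filter]
  exact sum_comm

lemma spanCard_pos {V : Finset (ZMod p)} {a : ZMod p × ZMod p} (h1 : a.1 ∈ V)
    (hne : a.1 ≠ a.2) : 0 < spanCard V a := by
  refine card_pos.2 ⟨a.1, mem_filter.2 ⟨h1, ?_⟩⟩
  rw [sub_self, ZMod.val_zero, Nat.pos_iff_ne_zero, Ne, ZMod.val_eq_zero, sub_eq_zero]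
  exact hne.symm

lemma spanCard_lt_spanCard {V : Finset (ZMod p)} {a b : ZMod p × ZMod p} (h1 : a.1 = b.1)
    (ha : a.2 ∈ V) (hlt : (a.2 - a.1).val < (b.2 - b.1).val) : spanCard V a < spanCard V b := by
  obtain ⟨u, x⟩ := a
  obtain ⟨u', y⟩ := b
  obtain rfl : u = u' := h1
  refine card_lt_card ((ssubset_iff_of_subset fun v hv => ?_).2 ⟨x, ?_, ?_⟩)
  · rw [mem_filter] at hv ⊢
    exact ⟨hv.1, hv.2.trans hlt⟩
  · exact mem_filter.2 ⟨ha, hlt⟩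
  · simp [mem_filter]

lemma spanCard_injOn [NeZero p] (V : Finset (ZMod p)) (u : ZMod p) :
    Set.InjOn (spanCard V) {a | a.1 = u ∧ a.2 ∈ V} := by
  rintro a ⟨rfl, ha⟩ b ⟨hb1, hb⟩ hab
  suffices (a.2 - a.1).val = (b.2 - a.1).val from
    Prod.ext hb1.symm (sub_left_injective (ZMod.val_injective p this))
  rcases lt_trichotomy (a.2 - a.1).val (b.2 - a.1).val with hlt | heq | hgt
  · exact absurd hab (spanCard_lt_spanCard hb1.symm ha (hb1 ▸ hlt)).ne
  · exact heq
  · exact absurd hab (spanCard_lt_spanCard hb1 hb (hb1 ▸ hgt)).ne'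

lemma succ_mul_card_le_of_cload_le [NeZero p] {S : Finset (ZMod p × ZMod p)} {C : ℕ}
    (hS : ∀ a ∈ S, a.1 ≠ a.2) (hload : ∀ t, cload p S t ≤ C) (k : ℕ) :
    (k + 1) * #S ≤ (C + k * (k + 1) / 2) * #(verts p S) := by
  set V := verts p S
  have hfst : ∀ a ∈ S, a.1 ∈ V := fun a ha => mem_union_left _ (mem_image_of_mem _ ha)
  have hsnd : ∀ a ∈ S, a.2 ∈ V := fun a ha => mem_union_right _ (mem_image_of_mem _ ha)
  have hspan : ∑ a ∈ S, spanCard V a ≤ C * #V := calc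
    ∑ a ∈ S, spanCard V a = ∑ v ∈ V, cload p S v := (sum_cload_eq_sum_spanCard S V).symm
    _ ≤ #V • C := sum_le_card_nsmul V _ C fun v _ => hload v
    _ = C * #V := by rw [smul_eq_mul, mul_comm]
  have hdeficit : ∑ a ∈ S, (k + 1 - spanCard V a) ≤ k * (k + 1) / 2 * #V := calc
    ∑ a ∈ S, (k + 1 - spanCard V a)
        = ∑ v ∈ V, ∑ a ∈ S with a.1 = v, (k + 1 - spanCard V a) :=
      (sum_fiberwise_of_maps_to hfst _).symm
    _ ≤ ∑ v ∈ V, k * (k + 1) / 2 := by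
      refine sum_le_sum fun v _ => sum_succ_tsub_le_of_injOn ?_ ?_ k
      · refine (spanCard_injOn V v).mono fun a ha => ?_
        obtain ⟨haS, rfl⟩ := mem_filter.1 ha
        exact ⟨rfl, hsnd a haS⟩
      · intro a ha
        obtain ⟨haS, -⟩ := mem_filter.1 ha
        exact spanCard_pos (hfst a haS) (hS a haS)
    _ = k * (k + 1) / 2 * #V := by rw [sum_const, smul_eq_mul, mul_comm]
  calc (k + 1) * #S = ∑ a ∈ S, (k + 1) := by rw [sum_const, smul_eq_mul, mul_comm]
    _ ≤ ∑ a ∈ S, (spanCard V a + (k + 1 - spanCard V a)) := sum_le_sum fun _ _ => le_add_tsub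
    _ = ∑ a ∈ S, spanCard V a + ∑ a ∈ S, (k + 1 - spanCard V a) := sum_add_distrib
    _ ≤ C * #V + k * (k + 1) / 2 * #V := add_le_add hspan hdeficit
    _ = (C + k * (k + 1) / 2) * #V := (add_mul _ _ _).symm

lemma ZMod.val_sub_add_val_sub [NeZero p] {i j : ZMod p} (h : i ≠ j) :
    (j - i).val + (i - j).val = p := by
  have hne : j - i ≠ 0 := sub_ne_zero.2 h.symm
  have hpos : 0 < (j - i).val := Nat.pos_of_ne_zero (mt (ZMod.val_eq_zero _).1 hne)
  rw [← neg_sub j i, ZMod.neg_val, if_neg hne]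
  have := ZMod.val_lt (j - i)
  omega

lemma mem_iff_swap_not_mem_of_shortest_arcs [NeZero p] {T : Finset (ZMod p × ZMod p)}
    (hT1 : ∀ a ∈ T, a.1 ≠ a.2 ∧ 2 * (a.2 - a.1).val ≤ p)
    (hT2 : ∀ i j : ZMod p, i ≠ j → 2 * (j - i).val < p → (i, j) ∈ T)
    (hT3 : ∀ i j : ZMod p, 2 * (j - i).val = p → ((i, j) ∈ T ↔ (j, i) ∉ T))
    {i j : ZMod p} (hij : i ≠ j) : (i, j) ∈ T ↔ (j, i) ∉ T := by
  have hsum := ZMod.val_sub_add_val_sub hij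
  rcases lt_trichotomy (2 * (j - i).val) p with hlt | heq | hgt
  · refine iff_of_true (hT2 i j hij hlt) fun hji => ?_
    have := (hT1 _ hji).2
    simp only at this
    omega
  · exact hT3 i j heq
  · refine iff_of_false (fun hij' => ?_) (not_not.2 (hT2 j i hij.symm (by omega)))
    have := (hT1 _ hij').2
    simp only at this
    omega

end Cycle

lemma card_mul_two_eq_card_offDiag {α : Type*} [Fintype α] [DecidableEq α]
    {T : Finset (α × α)} (hirr : ∀ a ∈ T, a.1 ≠ a.2)
    (hasymm : ∀ i j, i ≠ j → ((i, j) ∈ T ↔ (j, i) ∉ T)) :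
    #T * 2 = #(univ : Finset α).offDiag := by
  have hdisj : Disjoint T (T.image Prod.swap) := disjoint_left.2 fun a ha ha' => by
    obtain ⟨b, hb, rfl⟩ := mem_image.1 ha'
    exact (hasymm b.1 b.2 (hirr b hb)).1 hb ha
  have hunion : T ∪ T.image Prod.swap = univ.offDiag := by
    ext ⟨i, j⟩
    simp only [mem_union, mem_image, mem_offDiag, mem_univ, true_and]
    constructor
    · rintro (h | ⟨⟨j', i'⟩, hb, hswap⟩)
      · exact hirr _ h
      · obtain ⟨rfl, rfl⟩ := Prod.ext_iff.1 hswap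
        exact (hirr _ hb).symm
    · intro hij
      by_cases h : (i, j) ∈ T
      · exact Or.inl h
      · exact Or.inr ⟨(j, i), not_not.1 (mt (hasymm i j hij).2 h), rfl⟩
  rw [← hunion, card_union_of_disjoint hdisj, card_image_of_injective _ Prod.swap_injective,
    mul_two]

theorem stmt_10_general (N C k r W : ℕ) (hN : 2 ≤ N) (hk : 1 ≤ k) (hC : C = k * (k + 1) / 2 + r)
    -- `T` is the tournament of requests: all shortest clockwise arcs, with exactly one
    -- arc chosen per diametrical pair when `N` is even.
    (T : Finset (ZMod N × ZMod N))
    (hT1 : ∀ a ∈ T, a.1 ≠ a.2 ∧ 2 * (a.2 - a.1).val ≤ N)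
    (hT2 : ∀ i j : ZMod N, i ≠ j → 2 * (j - i).val < N → (i, j) ∈ T)
    (hT3 : ∀ i j : ZMod N, 2 * (j - i).val = N → ((i, j) ∈ T ↔ (j, i) ∉ T))
    -- a valid partition of the requests into `W` parts, each of load at most `C`
    (B : Fin W → Finset (ZMod N × ZMod N))
    (hdisj : ∀ w w', w ≠ w' → Disjoint (B w) (B w'))
    (hcover : ∀ a : ZMod N × ZMod N, a ∈ T ↔ ∃ w, a ∈ B w)
    (hload : ∀ w, ∀ t : ZMod N, cload N (B w) t ≤ C) :
    ⌈((N : ℚ) * ((N : ℚ) - 1) / 2) * ((k : ℚ) + 1) / ((k : ℚ) * (k + 1) + r)⌉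
      ≤ ((∑ w : Fin W, (verts N (B w)).card : ℕ) : ℤ) := by
  have : NeZero N := ⟨by omega⟩
  have hirr : ∀ a ∈ T, a.1 ≠ a.2 := fun a ha => (hT1 a ha).1
  have hcardT : ((#T : ℕ) : ℚ) * 2 = N * (N - 1) := by
    have h := card_mul_two_eq_card_offDiag hirr fun i j hij =>
      mem_iff_swap_not_mem_of_shortest_arcs hT1 hT2 hT3 hij
    rw [offDiag_card, card_univ, ZMod.card] at h
    have hQ : ((#T * 2 : ℕ) : ℚ) = ((N * N - N : ℕ) : ℚ) := congrArg _ h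
    push_cast [Nat.cast_sub (Nat.le_mul_self N)] at hQ
    linarith
  have hparts : ∑ w, #(B w) = #T := by
    rw [← card_biUnion fun x _ y _ hxy => hdisj x y hxy]
    congr 1
    ext a
    simp [hcover]
  have hcoef : C + k * (k + 1) / 2 = k * (k + 1) + r := by
    have := Nat.div_mul_cancel (Nat.even_mul_succ_self k).two_dvd
    omega
  have hbound : (k + 1) * #T ≤ (k * (k + 1) + r) * ∑ w, #(verts N (B w)) := calc
    (k + 1) * #T = ∑ w, (k + 1) * #(B w) := by rw [← hparts, mul_sum]
    _ ≤ ∑ w, (k * (k + 1) + r) * #(verts N (B w)) := sum_le_sum fun w _ => hcoef ▸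
      succ_mul_card_le_of_cload_le (fun a ha => hirr a ((hcover a).2 ⟨w, ha⟩)) (hload w) k
    _ = (k * (k + 1) + r) * ∑ w, #(verts N (B w)) := (mul_sum _ _ _).symm
  have hD : (0 : ℚ) < k * (k + 1) + r := by positivity
  rw [Int.ceil_le, Int.cast_natCast, div_le_iff₀ hD]
  have hboundQ : ((k : ℚ) + 1) * #T ≤ (k * (k + 1) + r) * ∑ w, #(verts N (B w)) := by
    exact_mod_cast hbound
  nlinarith

theorem stmt_10 (N C k r W : ℕ) (hN : 2 ≤ N) (hk : 1 ≤ k) (hr : r ≤ k)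
    (hC : C = k * (k + 1) / 2 + r)
    -- `T` is the tournament of requests: all shortest clockwise arcs, with exactly one
    -- arc chosen per diametrical pair when `N` is even.
    (T : Finset (ZMod N × ZMod N))
    (hT1 : ∀ a ∈ T, a.1 ≠ a.2 ∧ 2 * (a.2 - a.1).val ≤ N)
    (hT2 : ∀ i j : ZMod N, i ≠ j → 2 * (j - i).val < N → (i, j) ∈ T)
    (hT3 : ∀ i j : ZMod N, 2 * (j - i).val = N → ((i, j) ∈ T ↔ (j, i) ∉ T))
    -- a valid partition of the requests into `W` parts, each of load at most `C`
    (B : Fin W → Finset (ZMod N × ZMod N))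
    (hdisj : ∀ w w', w ≠ w' → Disjoint (B w) (B w'))
    (hcover : ∀ a : ZMod N × ZMod N, a ∈ T ↔ ∃ w, a ∈ B w)
    (hload : ∀ w, ∀ t : ZMod N, cload N (B w) t ≤ C) :
    ⌈((N : ℚ) * ((N : ℚ) - 1) / 2) * ((k : ℚ) + 1) / ((k : ℚ) * (k + 1) + r)⌉
      ≤ ((∑ w : Fin W, (verts N (B w)).card : ℕ) : ℤ) :=
  stmt_10_general N C k r W hN hk hC T hT1 hT2 hT3 B hdisj hcover hload
end

section
/- Suppose nonnegative integers α_1,…,α_6 satisfy ∑_{i=1}^{6} i·α_i = N(N−1), α_1 + α_2 ≥ 2α_6 + α_5, and α_2 + α_6 + (α_1 + α_3 + α_5)/2 ≥ N. Then A := ∑_{i=1}^{6} α_i satisfies A ≥ N(N−1)/4 + N/6. -/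
theorem stmt_14 (N a1 a2 a3 a4 a5 a6 : ℕ)
    (hsum : a1 + 2 * a2 + 3 * a3 + 4 * a4 + 5 * a5 + 6 * a6 = N * (N - 1))
    (h1 : a1 + a2 ≥ 2 * a6 + a5)
    (h2 : (a2 : ℚ) + (a6 : ℚ) + ((a1 : ℚ) + a3 + a5) / 2 ≥ N) :
    ((a1 : ℚ) + a2 + a3 + a4 + a5 + a6) ≥ (N : ℚ) * (N - 1) / 4 + (N : ℚ) / 6 := by
  rcases N with _ | n
  · simp only [Nat.cast_zero] at *
    have : (0:ℚ) ≤ a1 + a2 + a3 + a4 + a5 + a6 := by positivity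
    linarith
  · have hs : (a1 : ℚ) + 2 * a2 + 3 * a3 + 4 * a4 + 5 * a5 + 6 * a6
        = (n + 1 : ℚ) * n := by
      have := hsum
      simp only [Nat.succ_sub_one] at this
      exact_mod_cast congrArg (Nat.cast : ℕ → ℚ) this
    have h1' : (a1 : ℚ) + a2 ≥ 2 * a6 + a5 := by exact_mod_cast h1
    have h4 : (0:ℚ) ≤ a4 := by positivity
    push_cast at h2 ⊢
    linarith
end

section
/- If the complete graph K_v can be decomposed into h edge-disjoint triangles (K_3's), then the digraph obtained by duplicating each vertex i into two non-adjacent copies i_A, i_B, ordered 1_A < 2_A < … < v_A < 1_B < … < v_B around a cycle of 2v positions, admits a partition into h oriented K_{2,2,2}'s each of which loads every arc of the directed cycle C⃗_{2v} at most 3 times (load induced by clockwise shortest-path routing). -/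
open Finset

lemma Finset.exists_lt_lt_eq_of_card_eq_three {α : Type*} [LinearOrder α] {s : Finset α}
    (h : s.card = 3) : ∃ a b c, a < b ∧ b < c ∧ s = {a, b, c} := by
  set f := s.orderEmbOfFin h
  refine ⟨f 0, f 1, f 2, f.strictMono (by decide), f.strictMono (by decide), ?_⟩
  calc s = univ.image f := (s.image_orderEmbOfFin_univ h).symm
    _ = {f 0, f 1, f 2} := by ext; simp [Fin.exists_fin_succ, eq_comm]

section Load

variable {p : ℕ}

lemma cload_mono {S S' : Finset (ZMod p × ZMod p)} (h : S ⊆ S') (t : ZMod p) :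
    cload p S t ≤ cload p S' t :=
  card_le_card (filter_subset_filter _ h)

lemma cload_union_le (S S' : Finset (ZMod p × ZMod p)) (t : ZMod p) :
    cload p (S ∪ S') t ≤ cload p S t + cload p S' t := by
  unfold cload
  rw [filter_union]
  exact card_union_le _ _

lemma natCast_inj_of_lt {x y : ℕ} (hx : x < p) (hy : y < p) :
    (x : ZMod p) = y ↔ x = y := by
  rw [ZMod.natCast_eq_natCast_iff', Nat.mod_eq_of_lt hx, Nat.mod_eq_of_lt hy]

lemma val_natCast_sub_natCast [NeZero p] {x y : ℕ} (hx : x < p) (hy : y < p) :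
    ((y : ZMod p) - x).val = if x ≤ y then y - x else y + p - x := by
  split_ifs with h
  · rw [← Nat.cast_sub h, ZMod.val_natCast_of_lt (by omega)]
  · have hsub : (y : ZMod p) - x = ((y + p - x : ℕ) : ZMod p) := by
      simp [Nat.cast_sub (by omega : x ≤ y + p)]
    rw [hsub, ZMod.val_natCast_of_lt (by omega)]

lemma natCast_arc_covers_iff [NeZero p] {x y : ℕ} (hx : x < p) (hy : y < p) (t : ZMod p) :
    (t - x).val < ((y : ZMod p) - x).val ↔
      x ≤ t.val ∧ t.val < y ∨ y < x ∧ (x ≤ t.val ∨ t.val < y) := by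
  rw [← ZMod.natCast_zmod_val t, val_natCast_sub_natCast hx hy,
    val_natCast_sub_natCast hx (ZMod.val_lt t), ZMod.val_natCast_of_lt (ZMod.val_lt t)]
  have := ZMod.val_lt t
  split_ifs <;> omega

def cycleArcs (p : ℕ) {m : ℕ} (x : Fin (m + 1) → ℕ) : Finset (ZMod p × ZMod p) :=
  univ.image fun k => ((x k : ZMod p), (x (k + 1) : ZMod p))

lemma cload_cycleArcs_le_one {m : ℕ} {x : Fin (m + 1) → ℕ} (hx : StrictMono x)
    (hp : x (Fin.last m) < p) (t : ZMod p) : cload p (cycleArcs p x) t ≤ 1 := by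
  have : NeZero p := ⟨by omega⟩
  have hlt : ∀ k, x k < p := fun k => (hx.monotone (Fin.le_last k)).trans_lt hp
  unfold cload cycleArcs
  rw [filter_image]
  refine card_image_le.trans (card_le_one.2 fun k hk l hl => ?_)
  simp only [mem_filter, mem_univ, true_and, natCast_arc_covers_iff (hlt _) (hlt _)] at hk hl
  have last_or_lt_succ : ∀ k : Fin (m + 1), k = Fin.last m ∨ x k < x (k + 1) := fun k =>
    (Fin.le_last k).lt_or_eq.symm.imp_right fun h => hx (Fin.lt_add_one_iff.2 h)
  -- the arcs cover the disjoint intervals `[x k, x (k + 1))` and the wrap-around `[x m, x 0)`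
  by_contra hne
  wlog hkl : k < l generalizing k l
  · exact this l k hl hk (Ne.symm hne) (lt_of_le_of_ne (not_lt.1 hkl) (Ne.symm hne))
  have hx0_le := hx.monotone (Fin.zero_le k)
  have hk_succ := hx (Fin.lt_add_one_iff.2 (hkl.trans_le (Fin.le_last l)))
  have hk_succ_le := hx.monotone (Fin.add_one_le_of_lt hkl)
  rcases last_or_lt_succ l with rfl | hl1
  · rw [Fin.last_add_one] at hl
    omega
  · omega

end Load

section Doubling

variable {v : ℕ}

def copyA (i : Fin v) : ZMod (2 * v) := ((i : ℕ) : ZMod (2 * v))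

def copyB (i : Fin v) : ZMod (2 * v) := (((i : ℕ) + v : ℕ) : ZMod (2 * v))

lemma copyA_inj {i j : Fin v} : copyA i = copyA j ↔ i = j := by
  rw [copyA, copyA, natCast_inj_of_lt (by omega) (by omega), Fin.val_inj]

lemma copyB_inj {i j : Fin v} : copyB i = copyB j ↔ i = j := by
  rw [copyB, copyB, natCast_inj_of_lt (by omega) (by omega), Nat.add_right_cancel_iff,
    Fin.val_inj]

lemma copyA_ne_copyB (i j : Fin v) : copyA i ≠ copyB j := by
  rw [copyA, copyB, Ne, natCast_inj_of_lt (by omega) (by omega)]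
  omega

lemma copyB_ne_copyA (i j : Fin v) : copyB i ≠ copyA j := (copyA_ne_copyB j i).symm

def edgeArcs (i j : Fin v) : Finset (ZMod (2 * v) × ZMod (2 * v)) :=
  {(copyA i, copyA j), (copyB i, copyB j), (copyA j, copyB i), (copyB j, copyA i)}

def doubledArcs (T : Finset (Fin v)) : Finset (ZMod (2 * v) × ZMod (2 * v)) :=
  (T ×ˢ T).filter (fun ij => ij.1 < ij.2) |>.biUnion fun ij => edgeArcs ij.1 ij.2

lemma mem_doubledArcs {T : Finset (Fin v)} {e : ZMod (2 * v) × ZMod (2 * v)} :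
    e ∈ doubledArcs T ↔ ∃ i ∈ T, ∃ j ∈ T, i < j ∧ e ∈ edgeArcs i j := by
  simp [doubledArcs, and_assoc]

lemma eq_of_mem_edgeArcs {i j i' j' : Fin v}
    {e : ZMod (2 * v) × ZMod (2 * v)} (he : e ∈ edgeArcs i j) (he' : e ∈ edgeArcs i' j') :
    i = i' ∧ j = j' := by
  simp only [edgeArcs, mem_insert, mem_singleton] at he he'
  rcases he with rfl | rfl | rfl | rfl <;>
    simp only [Prod.mk.injEq, copyA_inj, copyB_inj, copyA_ne_copyB, copyB_ne_copyA, false_and,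
      and_false, or_false, false_or] at he' <;> tauto

lemma card_edgeArcs (i j : Fin v) : (edgeArcs i j).card = 4 := by
  simp [edgeArcs, copyA_ne_copyB, copyB_ne_copyA]

lemma disjoint_edgeArcs {i j i' j' : Fin v} (h : ¬(i = i' ∧ j = j')) :
    Disjoint (edgeArcs i j) (edgeArcs i' j') :=
  disjoint_left.2 fun _ he he' => h (eq_of_mem_edgeArcs he he')

lemma disjoint_doubledArcs {T T' : Finset (Fin v)} (h : (T ∩ T').card ≤ 1) :
    Disjoint (doubledArcs T) (doubledArcs T') := by
  refine disjoint_left.2 fun e he he' => ?_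
  obtain ⟨i, hi, j, hj, hij, he⟩ := mem_doubledArcs.1 he
  obtain ⟨i', hi', j', hj', -, he'⟩ := mem_doubledArcs.1 he'
  obtain ⟨rfl, rfl⟩ := eq_of_mem_edgeArcs he he'
  exact hij.ne (card_le_one.1 h i (mem_inter.2 ⟨hi, hi'⟩) j (mem_inter.2 ⟨hj, hj'⟩))

lemma doubledArcs_triple {a b c : Fin v} (hab : a < b) (hbc : b < c) :
    doubledArcs {a, b, c} = edgeArcs a b ∪ edgeArcs a c ∪ edgeArcs b c := by
  ext e
  simp only [mem_doubledArcs, mem_union, mem_insert, mem_singleton]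
  constructor
  · rintro ⟨i, hi, j, hj, hij, he⟩
    rcases hi with rfl | rfl | rfl <;> rcases hj with rfl | rfl | rfl <;> first
      | tauto | exact absurd hij (by order)
  · rintro ((he | he) | he)
    exacts [⟨a, by simp, b, by simp, hab, he⟩, ⟨a, by simp, c, by simp, hab.trans hbc, he⟩,
      ⟨b, by simp, c, by simp, hbc, he⟩]

lemma card_doubledArcs_triple {a b c : Fin v} (hab : a < b) (hbc : b < c) :
    (doubledArcs {a, b, c}).card = 12 := by
  rw [doubledArcs_triple hab hbc, card_union_of_disjoint, card_union_of_disjoint,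
    card_edgeArcs, card_edgeArcs, card_edgeArcs]
  · exact disjoint_edgeArcs fun h => hbc.ne h.2
  · exact disjoint_union_left.2 ⟨disjoint_edgeArcs fun h => hab.ne h.1,
      disjoint_edgeArcs fun h => hab.ne h.1⟩

lemma verts_doubledArcs {T : Finset (Fin v)} (hT : 1 < T.card) :
    verts (2 * v) (doubledArcs T) = T.image copyA ∪ T.image copyB := by
  ext z
  simp only [verts, mem_union, mem_image]
  constructor
  · rintro (⟨e, he, rfl⟩ | ⟨e, he, rfl⟩) <;>
      obtain ⟨i, hi, j, hj, -, he⟩ := mem_doubledArcs.1 he <;>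
      simp only [edgeArcs, mem_insert, mem_singleton] at he <;>
      rcases he with rfl | rfl | rfl | rfl <;>
      first
        | exact Or.inl ⟨i, hi, rfl⟩ | exact Or.inl ⟨j, hj, rfl⟩
        | exact Or.inr ⟨i, hi, rfl⟩ | exact Or.inr ⟨j, hj, rfl⟩
  · have arc {i j} (hi : i ∈ T) (hj : j ∈ T) (h : i < j) {e} (he : e ∈ edgeArcs i j) :
        e ∈ doubledArcs T :=
      mem_doubledArcs.2 ⟨i, hi, j, hj, h, he⟩
    rintro (⟨i, hi, rfl⟩ | ⟨i, hi, rfl⟩) <;>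
      obtain ⟨j, hj, hji⟩ := exists_mem_ne hT i <;>
      rcases hji.lt_or_gt with h | h
    · exact Or.inr ⟨(copyA j, copyA i), arc hj hi h (by simp [edgeArcs]), rfl⟩
    · exact Or.inl ⟨(copyA i, copyA j), arc hi hj h (by simp [edgeArcs]), rfl⟩
    · exact Or.inr ⟨(copyB j, copyB i), arc hj hi h (by simp [edgeArcs]), rfl⟩
    · exact Or.inl ⟨(copyB i, copyB j), arc hi hj h (by simp [edgeArcs]), rfl⟩

lemma card_verts_doubledArcs {T : Finset (Fin v)} (hT : 1 < T.card) :
    (verts (2 * v) (doubledArcs T)).card = 2 * T.card := by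
  rw [verts_doubledArcs hT, card_union_of_disjoint,
    card_image_of_injective _ fun _ _ => copyA_inj.1,
    card_image_of_injective _ fun _ _ => copyB_inj.1, two_mul]
  simp only [disjoint_left, mem_image]
  rintro _ ⟨i, -, rfl⟩ ⟨j, -, h⟩
  exact copyA_ne_copyB i j h.symm

lemma cload_doubledArcs_triple_le {a b c : Fin v} (hab : a < b) (hbc : b < c)
    (t : ZMod (2 * v)) : cload (2 * v) (doubledArcs {a, b, c}) t ≤ 3 := by
  set hexagon := cycleArcs (2 * v) ![(a : ℕ), b, c, a + v, b + v, c + v]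
  set triangle₁ := cycleArcs (2 * v) ![(a : ℕ), c, b + v]
  set triangle₂ := cycleArcs (2 * v) ![(b : ℕ), a + v, c + v]
  have hsub : doubledArcs {a, b, c} ⊆ hexagon ∪ triangle₁ ∪ triangle₂ := by
    rw [doubledArcs_triple hab hbc]
    intro e he
    simp only [edgeArcs, mem_union, mem_insert, mem_singleton] at he
    rcases he with ((he | he | he | he) | (he | he | he | he)) | (he | he | he | he) <;>
      subst he <;>
      simp [hexagon, triangle₁, triangle₂, cycleArcs, Fin.exists_fin_succ, copyA, copyB]
  calc cload (2 * v) (doubledArcs {a, b, c}) t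
      ≤ cload (2 * v) hexagon t + cload (2 * v) triangle₁ t + cload (2 * v) triangle₂ t :=
        (cload_mono hsub t).trans <|
          (cload_union_le _ _ t).trans (Nat.add_le_add_right (cload_union_le _ _ t) _)
    _ ≤ 1 + 1 + 1 := by
        gcongr <;>
          exact cload_cycleArcs_le_one
            (Fin.strictMono_iff_lt_succ.2 fun i => by fin_cases i <;> simp <;> omega)
            (by simp; omega) t

end Doubling

theorem stmt_15_general (v h : ℕ)
    -- a decomposition of `K_v` into `h` edge-disjoint triangles
    (tri : Fin h → Finset (Fin v))
    (htri : ∀ w, (tri w).card = 3)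
    (hdecomp : ∀ i j : Fin v, i ≠ j → ∃! w, i ∈ tri w ∧ j ∈ tri w) :
    -- there is a partition into `h` oriented `K_{2,2,2}`'s (6 vertices, 12 arcs each),
    -- each loading every arc of `C⃗_{2v}` at most 3 times, whose union is the digraph
    -- obtained from `K_v` by duplicating each vertex `i` into copies `i` and `i + v`.
    ∃ B : Fin h → Finset (ZMod (2 * v) × ZMod (2 * v)),
      (∀ w w', w ≠ w' → Disjoint (B w) (B w')) ∧
      (∀ w, (B w).card = 12) ∧
      (∀ w, (verts (2 * v) (B w)).card = 6) ∧
      (∀ w, ∀ t : ZMod (2 * v), cload (2 * v) (B w) t ≤ 3) ∧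
      (∀ a : ZMod (2 * v) × ZMod (2 * v),
        (∃ w, a ∈ B w) ↔
          ∃ i j : Fin v, (i : ℕ) < (j : ℕ) ∧
            (a = (((i : ℕ) : ZMod (2 * v)), ((j : ℕ) : ZMod (2 * v))) ∨
             a = ((((i : ℕ) + v : ℕ) : ZMod (2 * v)), (((j : ℕ) + v : ℕ) : ZMod (2 * v))) ∨
             a = (((j : ℕ) : ZMod (2 * v)), (((i : ℕ) + v : ℕ) : ZMod (2 * v))) ∨
             a = ((((j : ℕ) + v : ℕ) : ZMod (2 * v)), ((i : ℕ) : ZMod (2 * v))))) := by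
  choose a b c hab hbc htri_eq using fun w => exists_lt_lt_eq_of_card_eq_three (htri w)
  refine ⟨fun w => doubledArcs (tri w), fun w w' hne => ?_, fun w => ?_, fun w => ?_,
    fun w t => ?_, fun e => ?_⟩ <;> beta_reduce
  · refine disjoint_doubledArcs (card_le_one.2 fun i hi j hj => by_contra fun hij => hne ?_)
    rw [mem_inter] at hi hj
    exact (hdecomp i j hij).unique ⟨hi.1, hj.1⟩ ⟨hi.2, hj.2⟩
  · rw [htri_eq w, card_doubledArcs_triple (hab w) (hbc w)]
  · rw [card_verts_doubledArcs (by rw [htri w]; norm_num), htri w]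
  · rw [htri_eq w]
    exact cload_doubledArcs_triple_le (hab w) (hbc w) t
  · simp only [mem_doubledArcs, edgeArcs, mem_insert, mem_singleton]
    constructor
    · rintro ⟨w, i, -, j, -, hij, he⟩
      exact ⟨i, j, hij, he⟩
    · rintro ⟨i, j, hij, he⟩
      obtain ⟨w, ⟨hi, hj⟩, -⟩ := hdecomp i j (Fin.ne_of_lt hij)
      exact ⟨w, i, hi, j, hj, hij, he⟩

theorem stmt_15 (v h : ℕ) (hv : 1 ≤ v)
    -- a decomposition of `K_v` into `h` edge-disjoint triangles
    (tri : Fin h → Finset (Fin v))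
    (htri : ∀ w, (tri w).card = 3)
    (hdecomp : ∀ i j : Fin v, i ≠ j → ∃! w, i ∈ tri w ∧ j ∈ tri w) :
    -- there is a partition into `h` oriented `K_{2,2,2}`'s (6 vertices, 12 arcs each),
    -- each loading every arc of `C⃗_{2v}` at most 3 times, whose union is the digraph
    -- obtained from `K_v` by duplicating each vertex `i` into copies `i` and `i + v`.
    ∃ B : Fin h → Finset (ZMod (2 * v) × ZMod (2 * v)),
      (∀ w w', w ≠ w' → Disjoint (B w) (B w')) ∧
      (∀ w, (B w).card = 12) ∧
      (∀ w, (verts (2 * v) (B w)).card = 6) ∧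
      (∀ w, ∀ t : ZMod (2 * v), cload (2 * v) (B w) t ≤ 3) ∧
      (∀ a : ZMod (2 * v) × ZMod (2 * v),
        (∃ w, a ∈ B w) ↔
          ∃ i j : Fin v, (i : ℕ) < (j : ℕ) ∧
            (a = (((i : ℕ) : ZMod (2 * v)), ((j : ℕ) : ZMod (2 * v))) ∨
             a = ((((i : ℕ) + v : ℕ) : ZMod (2 * v)), (((j : ℕ) + v : ℕ) : ZMod (2 * v))) ∨
             a = (((j : ℕ) : ZMod (2 * v)), (((i : ℕ) + v : ℕ) : ZMod (2 * v))) ∨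
             a = ((((j : ℕ) + v : ℕ) : ZMod (2 * v)), ((i : ℕ) : ZMod (2 * v))))) :=
  stmt_15_general v h tri htri hdecomp
end

section
/- For grooming factor C = 4, any valid solution satisfies A(4,N) ≥ (7/32)N(N−1) + (3/160)(N−1). -/
/-!
Each part `S`, with `p` vertices and `E` arcs, satisfies `6E + 9 ≤ 15p`. Count the pairs
(arc, vertex of the part on its route): every vertex has load at most 4, and for each `k` at most
`p` arcs pass through exactly `k` vertices of the part (one per tail), so `3E ≤ 7p` since
`3 ≤ h + 2[h = 1] + [h = 2]` for every `h ≥ 1`. With `2E + p ≤ p²` (a part contains no arc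
together with its reverse) this gives the bound for every `p` except `(p, E) = (6, 14)`. There all
these counts are tight: between them, the two arcs through at least three vertices pass through
every vertex of the part exactly once, which forces them to be reverses of each other.

Summing over the parts gives `15A ≥ 6|T| + 9W = 3N(N-1) + 9W`. The routes of the tournament have
total length `N⌊N²/4⌋/2`, at most `4N` per part, so `N² ≤ 32W + 1`.
-/

open Finset

namespace CycleGrooming

variable {N : ℕ}

def Covers (a : ZMod N × ZMod N) (v : ZMod N) : Prop :=
  (v - a.1).val < (a.2 - a.1).val

instance (a : ZMod N × ZMod N) (v : ZMod N) : Decidable (Covers a v) :=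
  inferInstanceAs (Decidable (_ < _))

theorem cload_eq_sum (S : Finset (ZMod N × ZMod N)) (t : ZMod N) :
    cload N S t = ∑ a ∈ S, if Covers a t then 1 else 0 :=
  card_filter _ _

theorem covers_fst {a : ZMod N × ZMod N} (h : a.1 ≠ a.2) : Covers a a.1 := by
  rw [Covers, sub_self, ZMod.val_zero, ZMod.val_pos, sub_ne_zero]
  exact h.symm

theorem not_covers_snd (a : ZMod N × ZMod N) : ¬ Covers a a.2 :=
  lt_irrefl _

theorem val_sub_add_val_sub [NeZero N] (x y z : ZMod N) :
    (x - y).val + (y - z).val = (x - z).val ∨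
      (x - y).val + (y - z).val = (x - z).val + N := by
  have h := ZMod.val_add (x - y) (y - z)
  rw [sub_add_sub_cancel] at h
  rw [h]
  have := ZMod.val_lt (x - y)
  have := ZMod.val_lt (y - z)
  rcases Nat.lt_or_ge ((x - y).val + (y - z).val) N with h | h
  · exact Or.inl (Nat.mod_eq_of_lt h).symm
  · right
    rw [Nat.mod_eq_sub_mod h, Nat.mod_eq_of_lt (by omega)]
    omega

theorem val_sub_rev [NeZero N] {x y : ZMod N} (h : x ≠ y) : (x - y).val = N - (y - x).val := by
  rw [← neg_sub, ZMod.neg_val, if_neg (sub_ne_zero.mpr h.symm)]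

theorem Covers.of_val_sub_le [NeZero N] {a : ZMod N × ZMod N} {u v : ZMod N} (hv : Covers a v)
    (h : (v - u).val ≤ (v - a.1).val) : Covers a u := by
  unfold Covers at *
  have := ZMod.val_lt (u - a.1)
  rcases val_sub_add_val_sub v u a.1 with h' | h' <;> omega

theorem snd_eq_fst_of_covers [NeZero N] {a b : ZMod N × ZMod N} (ha : a.1 ≠ a.2)
    (hba : Covers b a.2) (hab : Covers a b.2) (h : ¬ Covers a b.1) : a.2 = b.1 := by
  unfold Covers at *
  rcases (not_lt.mp h).eq_or_lt with heq | hlt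
  · simpa using ZMod.val_injective N heq
  · have hb1 : b.1 ≠ a.1 := fun h1 => by simp [h1] at hlt
    have := val_sub_rev hb1
    have := val_sub_rev ha
    have := ZMod.val_lt (a.2 - b.1)
    have := ZMod.val_lt (b.2 - a.1)
    rcases val_sub_add_val_sub a.2 a.1 b.1 with h1 | h1 <;>
      rcases val_sub_add_val_sub b.2 b.1 a.1 with h2 | h2 <;> omega

section Hops

variable {V : Finset (ZMod N)} {S : Finset (ZMod N × ZMod N)} {a b : ZMod N × ZMod N}

def hops (V : Finset (ZMod N)) (a : ZMod N × ZMod N) : ℕ := (V.filter (Covers a)).card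

theorem hops_univ [NeZero N] (a : ZMod N × ZMod N) : hops univ a = (a.2 - a.1).val := by
  rw [← card_range (a.2 - a.1).val]
  refine card_nbij' (fun v => (v - a.1).val) (fun d => (d : ZMod N) + a.1) ?_ ?_ ?_ ?_
  · intro v hv
    simpa [Covers] using hv
  · intro d hd
    simp only [coe_range, Set.mem_Iio] at hd
    simp only [coe_filter, mem_univ, true_and, Set.mem_ofPred_eq, Covers, add_sub_cancel_right,
      ZMod.val_natCast]
    exact (Nat.mod_le d N).trans_lt hd
  · intro v _
    simp
  · intro d hd
    simp only [coe_range, Set.mem_Iio] at hd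
    simp only [add_sub_cancel_right, ZMod.val_natCast]
    exact Nat.mod_eq_of_lt (hd.trans (ZMod.val_lt _))

theorem one_le_hops (h1 : a.1 ∈ V) (h : a.1 ≠ a.2) : 1 ≤ hops V a :=
  card_pos.mpr ⟨a.1, mem_filter.mpr ⟨h1, covers_fst h⟩⟩

theorem sum_hops_eq_sum_cload (S : Finset (ZMod N × ZMod N)) (V : Finset (ZMod N)) :
    ∑ a ∈ S, hops V a = ∑ v ∈ V, cload N S v := by
  simp only [hops, cload_eq_sum, card_filter]
  exact sum_comm

theorem sum_hops_le {C : ℕ} (hload : ∀ t, cload N S t ≤ C) :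
    ∑ a ∈ S, hops V a ≤ C * V.card := by
  rw [sum_hops_eq_sum_cload, mul_comm]
  exact sum_le_card_nsmul _ _ _ fun v _ => hload v

theorem hops_lt_hops (ha : a.2 ∈ V) (h1 : a.1 = b.1)
    (h : (a.2 - a.1).val < (b.2 - b.1).val) : hops V a < hops V b := by
  obtain ⟨a1, a2⟩ := a
  obtain ⟨b1, b2⟩ := b
  obtain rfl : a1 = b1 := h1
  refine card_lt_card ((ssubset_iff_of_subset fun v hv => ?_).mpr ⟨a2, ?_, ?_⟩)
  · simp only [mem_filter, Covers] at hv ⊢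
    exact ⟨hv.1, hv.2.trans h⟩
  · exact mem_filter.mpr ⟨ha, h⟩
  · exact fun hv => not_covers_snd _ (mem_filter.mp hv).2

theorem eq_of_hops_eq [NeZero N] (ha : a.2 ∈ V) (hb : b.2 ∈ V) (h1 : a.1 = b.1)
    (h : hops V a = hops V b) : a = b := by
  rcases lt_trichotomy (a.2 - a.1).val (b.2 - b.1).val with hlt | heq | hgt
  · exact absurd h (hops_lt_hops ha h1 hlt).ne
  · have : a.2 - a.1 = b.2 - b.1 := ZMod.val_injective N heq
    exact Prod.ext h1 (by simpa [h1] using this)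
  · exact absurd h (hops_lt_hops hb h1.symm hgt).ne'

theorem injOn_fst_filter_hops_eq [NeZero N] (hSV : S ⊆ V ×ˢ V) (k : ℕ) :
    Set.InjOn Prod.fst (S.filter (hops V · = k) : Set (ZMod N × ZMod N)) := by
  intro a ha b hb h
  obtain ⟨ha, hka⟩ := mem_filter.mp ha
  obtain ⟨hb, hkb⟩ := mem_filter.mp hb
  exact eq_of_hops_eq (mem_product.mp (hSV ha)).2 (mem_product.mp (hSV hb)).2 h
    (hka.trans hkb.symm)

theorem card_filter_hops_eq_le [NeZero N] (hSV : S ⊆ V ×ˢ V) (k : ℕ) :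
    (S.filter (hops V · = k)).card ≤ V.card :=
  card_le_card_of_injOn Prod.fst (fun _ ha => (mem_product.mp (hSV (mem_filter.mp ha).1)).1)
    (injOn_fst_filter_hops_eq hSV k)

theorem cload_filter_hops_eq_le [NeZero N] (hSV : S ⊆ V ×ˢ V) (k : ℕ) (v : ZMod N) :
    cload N (S.filter (hops V · = k)) v ≤ k := by
  set X := (S.filter (hops V · = k)).filter (Covers · v)
  change X.card ≤ k
  rcases X.eq_empty_or_nonempty with hX | hX
  · simp [hX]
  -- the arc of `X` starting furthest back covers the tails of all the others
  obtain ⟨x, hx, hmax⟩ := X.exists_max_image (fun a => (v - a.1).val) hX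
  obtain ⟨hx, hxv⟩ := mem_filter.mp hx
  obtain ⟨-, hxk⟩ := mem_filter.mp hx
  calc X.card ≤ hops V x :=
        card_le_card_of_injOn Prod.fst
          (fun y hy => mem_filter.mpr ⟨(mem_product.mp (hSV (mem_filter.mp
            (mem_filter.mp hy).1).1)).1, hxv.of_val_sub_le (hmax y hy)⟩)
          ((injOn_fst_filter_hops_eq hSV k).mono (filter_subset _ _))
    _ = k := hxk

end Hops

section Part

variable {V : Finset (ZMod N)} {S : Finset (ZMod N × ZMod N)}

theorem fst_ne_snd_of_swap_notMem (hS : ∀ a ∈ S, a.swap ∉ S) {a : ZMod N × ZMod N}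
    (ha : a ∈ S) : a.1 ≠ a.2 :=
  fun h => hS a ha (by rwa [show a.swap = a from Prod.ext h.symm h])

theorem sum_eq_sum_filter_hops (hS : ∀ a ∈ S, 1 ≤ hops V a) (g : ZMod N × ZMod N → ℕ) :
    ∑ a ∈ S, g a = ∑ a ∈ S.filter (hops V · = 1), g a +
      ∑ a ∈ S.filter (hops V · = 2), g a + ∑ a ∈ S.filter (3 ≤ hops V ·), g a := by
  simp only [sum_filter, ← sum_add_distrib]
  refine sum_congr rfl fun a ha => ?_
  have := hS a ha
  split_ifs <;> omega

theorem three_mul_card_le [NeZero N] {C : ℕ} (hSV : S ⊆ V ×ˢ V)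
    (hS : ∀ a ∈ S, a.1 ≠ a.2) (hload : ∀ t, cload N S t ≤ C) :
    3 * S.card ≤ (C + 3) * V.card := by
  have hpos a (ha : a ∈ S) : 1 ≤ hops V a := one_le_hops (mem_product.mp (hSV ha)).1 (hS a ha)
  have hcard := sum_eq_sum_filter_hops hpos 1
  have hsum := sum_eq_sum_filter_hops hpos (hops V)
  rw [sum_const_nat fun a ha => (mem_filter.mp ha).2,
    sum_const_nat fun a ha => (mem_filter.mp ha).2] at hsum
  simp only [Pi.one_apply, sum_const, smul_eq_mul, mul_one] at hcard
  have h₃ :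
      (S.filter (3 ≤ hops V ·)).card * 3 ≤ ∑ a ∈ S.filter (3 ≤ hops V ·), hops V a :=
    card_nsmul_le_sum _ _ 3 fun a ha => (mem_filter.mp ha).2
  have h₁ := card_filter_hops_eq_le hSV 1
  have h₂ := card_filter_hops_eq_le hSV 2
  have htotal := sum_hops_le hload (V := V)
  linarith

theorem two_mul_card_add_card_le (hSV : S ⊆ V ×ˢ V) (hS : ∀ a ∈ S, a.swap ∉ S) :
    2 * S.card + V.card ≤ V.card * V.card := by
  have hsub : S ∪ S.image Prod.swap ⊆ V.offDiag := by
    intro a ha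
    rcases mem_union.mp ha with ha | ha
    · exact mem_offDiag.mpr ⟨(mem_product.mp (hSV ha)).1, (mem_product.mp (hSV ha)).2,
        fst_ne_snd_of_swap_notMem hS ha⟩
    · obtain ⟨b, hb, rfl⟩ := mem_image.mp ha
      exact mem_offDiag.mpr ⟨(mem_product.mp (hSV hb)).2, (mem_product.mp (hSV hb)).1,
        (fst_ne_snd_of_swap_notMem hS hb).symm⟩
  have hdisj : Disjoint S (S.image Prod.swap) := by
    refine disjoint_left.mpr fun a ha ha' => ?_
    obtain ⟨b, hb, rfl⟩ := mem_image.mp ha'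
    exact hS b hb ha
  have := card_le_card hsub
  rw [card_union_of_disjoint hdisj, card_image_of_injective _ Prod.swap_injective,
    offDiag_card] at this
  have := Nat.le_mul_self V.card
  omega

theorem cload_pair {a b : ZMod N × ZMod N} (hab : a ≠ b) (t : ZMod N) :
    cload N {a, b} t = (if Covers a t then 1 else 0) + (if Covers b t then 1 else 0) := by
  rw [cload_eq_sum, sum_pair hab]

theorem eq_swap_of_covers_iff_not [NeZero N] {a b : ZMod N × ZMod N} (ha : a ∈ V ×ˢ V)
    (hb : b ∈ V ×ˢ V) (ha' : a.1 ≠ a.2) (hb' : b.1 ≠ b.2)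
    (h : ∀ v ∈ V, Covers a v ↔ ¬ Covers b v) : b = a.swap := by
  rw [mem_product] at ha hb
  have hab₁ : ¬ Covers a b.1 := fun hc => (h _ hb.1).mp hc (covers_fst hb')
  have hba₁ : ¬ Covers b a.1 := (h _ ha.1).mp (covers_fst ha')
  have hab₂ : Covers a b.2 := (h _ hb.2).mpr (not_covers_snd b)
  have hba₂ : Covers b a.2 := not_not.mp fun hc => not_covers_snd a ((h _ ha.2).mpr hc)
  exact Prod.ext (snd_eq_fst_of_covers ha' hba₂ hab₂ hab₁).symm
    (snd_eq_fst_of_covers hb' hab₂ hba₂ hba₁)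

theorem card_long_eq_two_and_cload_long_eq_one [NeZero N] (hSV : S ⊆ V ×ˢ V)
    (hS : ∀ a ∈ S, a.1 ≠ a.2) (hload : ∀ t, cload N S t ≤ 4) (hV : V.card = 6)
    (hE : S.card = 14) :
    (S.filter (3 ≤ hops V ·)).card = 2 ∧
      ∀ v ∈ V, cload N (S.filter (3 ≤ hops V ·)) v = 1 := by
  set S₁ := S.filter (hops V · = 1)
  set S₂ := S.filter (hops V · = 2)
  set S₃ := S.filter (3 ≤ hops V ·)
  have hpos a (ha : a ∈ S) : 1 ≤ hops V a := one_le_hops (mem_product.mp (hSV ha)).1 (hS a ha)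
  have hsplit := sum_eq_sum_filter_hops hpos
  have hcard : S.card = S₁.card + S₂.card + S₃.card := by simpa using hsplit 1
  have hsum : ∑ a ∈ S, hops V a = S₁.card + 2 * S₂.card + ∑ a ∈ S₃, hops V a := by
    rw [hsplit, sum_const_nat fun a ha => (mem_filter.mp ha).2,
      sum_const_nat fun a ha => (mem_filter.mp ha).2]
    ring
  have hsplit_load v : cload N S v = cload N S₁ v + cload N S₂ v + cload N S₃ v := by
    simp only [cload_eq_sum]
    exact hsplit _
  have h₃ : S₃.card * 3 ≤ ∑ a ∈ S₃, hops V a :=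
    card_nsmul_le_sum S₃ (hops V) 3 fun a ha => (mem_filter.mp ha).2
  have h₁ : S₁.card ≤ 6 := hV ▸ card_filter_hops_eq_le hSV 1
  have h₂ : S₂.card ≤ 6 := hV ▸ card_filter_hops_eq_le hSV 2
  have htotal : ∑ a ∈ S, hops V a ≤ 4 * 6 := hV ▸ sum_hops_le hload
  -- equality holds in `3 * 14 ≤ ∑ hops + 2 * #S₁ + #S₂ ≤ 4 * 6 + 2 * 6 + 6`
  have hfull : ∀ v ∈ V, cload N S v = 4 := by
    refine (sum_eq_sum_iff_of_le fun v _ => hload v).mp ?_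
    rw [sum_const, hV, ← sum_hops_eq_sum_cload]
    simp only [smul_eq_mul]
    omega
  have hlong : ∀ v ∈ V, 1 ≤ cload N S₃ v := fun v hv => by
    have : cload N S₁ v ≤ 1 := cload_filter_hops_eq_le hSV 1 v
    have : cload N S₂ v ≤ 2 := cload_filter_hops_eq_le hSV 2 v
    have := hsplit_load v
    have := hfull v hv
    omega
  refine ⟨by omega, fun v hv => ((sum_eq_sum_iff_of_le hlong).mp ?_ v hv).symm⟩
  rw [← sum_hops_eq_sum_cload, sum_const, hV]
  simp only [smul_eq_mul]
  omega

theorem card_ne_fourteen_of_card_eq_six [NeZero N] (hSV : S ⊆ V ×ˢ V)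
    (hS : ∀ a ∈ S, a.swap ∉ S) (hload : ∀ t, cload N S t ≤ 4) (hV : V.card = 6) :
    S.card ≠ 14 := by
  intro hE
  have hloop a (ha : a ∈ S) : a.1 ≠ a.2 := fst_ne_snd_of_swap_notMem hS ha
  obtain ⟨hcard, hcover⟩ := card_long_eq_two_and_cload_long_eq_one hSV hloop hload hV hE
  obtain ⟨a, b, hab, hS₃⟩ := card_eq_two.mp hcard
  have ha : a ∈ S := (mem_filter.mp (hS₃ ▸ mem_insert_self a {b})).1
  have hb : b ∈ S := (mem_filter.mp (hS₃ ▸ mem_insert_of_mem (mem_singleton_self b))).1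
  suffices hba : b = a.swap from hS a ha (hba ▸ hb)
  refine eq_swap_of_covers_iff_not (hSV ha) (hSV hb) (hloop a ha) (hloop b hb) fun v hv => ?_
  have := hcover v hv
  rw [hS₃, cload_pair hab] at this
  split_ifs at this <;> simp_all

theorem subset_verts_product (S : Finset (ZMod N × ZMod N)) : S ⊆ verts N S ×ˢ verts N S :=
  fun _ ha => mem_product.mpr
    ⟨mem_union_left _ (mem_image_of_mem _ ha), mem_union_right _ (mem_image_of_mem _ ha)⟩

theorem six_mul_card_add_nine_le [NeZero N] (hne : S.Nonempty) (hS : ∀ a ∈ S, a.swap ∉ S)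
    (hload : ∀ t, cload N S t ≤ 4) : 6 * S.card + 9 ≤ 15 * (verts N S).card := by
  have hSV := subset_verts_product S
  have hloop a (ha : a ∈ S) : a.1 ≠ a.2 := fst_ne_snd_of_swap_notMem hS ha
  have h₇ := three_mul_card_le hSV hloop hload
  have hsq := two_mul_card_add_card_le hSV hS
  have h₆ := card_ne_fourteen_of_card_eq_six hSV hS hload
  obtain ⟨a, ha⟩ := hne
  have h₂ : 2 ≤ (verts N S).card := one_lt_card.mpr
    ⟨a.1, (mem_product.mp (hSV ha)).1, a.2, (mem_product.mp (hSV ha)).2, hloop a ha⟩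
  by_cases h₉ : 9 ≤ (verts N S).card
  · omega
  · interval_cases (verts N S).card <;> omega

end Part

def IsTournament {α : Type*} (T : Finset (α × α)) : Prop :=
  ∀ a : α × α, a ∈ T ↔ a.1 ≠ a.2 ∧ a.swap ∉ T

section Tournament

variable {α : Type*} {T : Finset (α × α)}

theorem IsTournament.swap_notMem (hT : IsTournament T) {a : α × α} (ha : a ∈ T) :
    a.swap ∉ T :=
  ((hT a).mp ha).2

variable [Fintype α] [DecidableEq α]

theorem IsTournament.sum_add_sum_swap {M : Type*} [AddCommMonoid M] (hT : IsTournament T)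
    (f : α × α → M) : ∑ a ∈ T, (f a + f a.swap) = ∑ a ∈ univ.offDiag, f a := by
  have hunion : univ.offDiag = T ∪ T.image Prod.swap := by
    ext a
    simp only [mem_offDiag, mem_univ, true_and, mem_union, mem_image]
    refine ⟨fun h => ?_, ?_⟩
    · by_cases ha : a ∈ T
      · exact Or.inl ha
      · exact Or.inr ⟨a.swap, (hT _).mpr ⟨Ne.symm h, by simpa using ha⟩, a.swap_swap⟩
    · rintro (ha | ⟨b, hb, rfl⟩)
      · exact ((hT a).mp ha).1
      · exact ((hT b).mp hb).1.symm
  have hdisj : Disjoint T (T.image Prod.swap) := disjoint_left.mpr fun a ha ha' => by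
    obtain ⟨b, hb, rfl⟩ := mem_image.mp ha'
    exact hT.swap_notMem hb ha
  rw [hunion, sum_union hdisj, sum_image fun _ _ _ _ h => Prod.swap_injective h,
    sum_add_distrib]

theorem IsTournament.two_mul_card_add_card (hT : IsTournament T) :
    2 * T.card + Fintype.card α = Fintype.card α * Fintype.card α := by
  have := hT.sum_add_sum_swap fun _ => 1
  simp only [sum_add_distrib, sum_const, smul_eq_mul, mul_one, offDiag_card, card_univ] at this
  have := Nat.le_mul_self (Fintype.card α)
  omega

end Tournament

section Shortest

variable [NeZero N] {T : Finset (ZMod N × ZMod N)}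

theorem isTournament_of_shortest (hT1 : ∀ a ∈ T, a.1 ≠ a.2 ∧ 2 * (a.2 - a.1).val ≤ N)
    (hT2 : ∀ i j : ZMod N, i ≠ j → 2 * (j - i).val < N → (i, j) ∈ T)
    (hT3 : ∀ i j : ZMod N, 2 * (j - i).val = N → ((i, j) ∈ T ↔ (j, i) ∉ T)) :
    IsTournament T := by
  rintro ⟨i, j⟩
  simp only [Prod.swap_prod_mk]
  by_cases hij : i = j
  · subst hij
    simpa using fun h => (hT1 _ h).1 rfl
  have hrev := val_sub_rev hij
  have := ZMod.val_lt (j - i)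
  have hT1' := fun h => (hT1 (j, i) h).2
  simp only [hrev] at hT1'
  rcases lt_trichotomy (2 * (j - i).val) N with h | h | h
  · exact iff_of_true (hT2 i j hij h) ⟨hij, fun h' => by have := hT1' h'; omega⟩
  · simpa [hij] using hT3 i j h
  · refine iff_of_false (fun h' => ?_) ?_
    · have := (hT1 (i, j) h').2
      dsimp only at this
      omega
    simpa [hij] using hT2 j i (Ne.symm hij) (by omega)

theorem two_mul_sum_val_sub_of_shortest
    (hT1 : ∀ a ∈ T, a.1 ≠ a.2 ∧ 2 * (a.2 - a.1).val ≤ N) (hT : IsTournament T) :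
    2 * ∑ a ∈ T, (a.2 - a.1).val = N * ∑ x : ZMod N, min x.val (-x).val := by
  set d : ZMod N × ZMod N → ℕ := fun a => min (a.2 - a.1).val (a.1 - a.2).val
  have hd a (ha : a ∈ T) : (a.2 - a.1).val + (a.2 - a.1).val = d a + d a.swap := by
    obtain ⟨hne, hle⟩ := hT1 a ha
    have := val_sub_rev hne
    simp only [d, Prod.fst_swap, Prod.snd_swap]
    omega
  calc 2 * ∑ a ∈ T, (a.2 - a.1).val = ∑ a ∈ T, (d a + d a.swap) := by
        rw [two_mul, ← sum_add_distrib]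
        exact sum_congr rfl hd
    _ = ∑ a ∈ univ.offDiag, d a := hT.sum_add_sum_swap d
    _ = ∑ a, d a := sum_subset (subset_univ _) fun a _ ha => by
        simp only [mem_offDiag, mem_univ, true_and, not_not] at ha
        simp [d, ha]
    _ = ∑ i : ZMod N, ∑ x : ZMod N, min x.val (-x).val := by
        rw [Fintype.sum_prod_type]
        refine sum_congr rfl fun i _ => Fintype.sum_equiv (Equiv.subRight i) _ _ fun j => ?_
        simp [d, neg_sub]
    _ = N * ∑ x : ZMod N, min x.val (-x).val := by simp [ZMod.card]

end Shortest

theorem sq_le_four_mul_sum_range_min :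
    ∀ n : ℕ, n * n ≤ 4 * ∑ d ∈ range n, min d (n - d) + 1
  | 0 => by simp
  | 1 => by simp
  | n + 2 => by
    have ih := sq_le_four_mul_sum_range_min n
    have hshift : ∀ i ∈ range n, min (i + 1) (n + 2 - (i + 1)) = min i (n - i) + 1 :=
      fun i hi => by have := mem_range.mp hi; omega
    have hstep :
        ∑ d ∈ range (n + 2), min d (n + 2 - d) =
          ∑ d ∈ range n, min d (n - d) + (n + 1) := by
      rw [sum_range_succ', sum_range_succ, sum_congr rfl hshift, sum_add_distrib]
      simp only [sum_const, card_range, smul_eq_mul]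
      omega
    rw [hstep]
    nlinarith

theorem sq_le_four_mul_sum_min [NeZero N] :
    N * N ≤ 4 * ∑ x : ZMod N, min x.val (-x).val + 1 := by
  obtain ⟨n, rfl⟩ : ∃ n, N = n + 1 := Nat.exists_eq_succ_of_ne_zero (NeZero.ne N)
  convert sq_le_four_mul_sum_range_min (n + 1) using 3
  rw [← Fin.sum_univ_eq_sum_range]
  refine sum_congr rfl fun x _ => ?_
  rw [ZMod.neg_val]
  split_ifs with hx
  · subst hx
    rfl
  · rfl

theorem sum_val_sub_le [NeZero N] {S : Finset (ZMod N × ZMod N)} {C : ℕ}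
    (hload : ∀ t, cload N S t ≤ C) : ∑ a ∈ S, (a.2 - a.1).val ≤ C * N := by
  simpa [hops_univ] using sum_hops_le (V := univ) hload

theorem sq_le_of_partition [NeZero N] {C W : ℕ} {T : Finset (ZMod N × ZMod N)}
    (hT1 : ∀ a ∈ T, a.1 ≠ a.2 ∧ 2 * (a.2 - a.1).val ≤ N) (hT : IsTournament T)
    {B : Fin W → Finset (ZMod N × ZMod N)}
    (hB : ((univ : Finset (Fin W)) : Set (Fin W)).PairwiseDisjoint B) (hTB : T = univ.biUnion B)
    (hload : ∀ w t, cload N (B w) t ≤ C) :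
    N * N ≤ 8 * C * W + 1 := by
  have hlen : ∑ a ∈ T, (a.2 - a.1).val ≤ W * (C * N) := by
    rw [hTB, sum_biUnion hB]
    simpa using sum_le_card_nsmul univ _ _ fun w _ => sum_val_sub_le (hload w)
  have hs : ∑ x : ZMod N, min x.val (-x).val ≤ 2 * C * W := by
    refine Nat.le_of_mul_le_mul_left ?_ (NeZero.pos N)
    rw [← two_mul_sum_val_sub_of_shortest hT1 hT]
    nlinarith
  nlinarith [sq_le_four_mul_sum_min (N := N)]

end CycleGrooming

open CycleGrooming

theorem stmt_17 (N W : ℕ) (hN : 2 ≤ N)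
    -- `T` is the tournament of requests: all shortest clockwise arcs, with exactly one
    -- arc chosen per diametrical pair when `N` is even.
    (T : Finset (ZMod N × ZMod N))
    (hT1 : ∀ a ∈ T, a.1 ≠ a.2 ∧ 2 * (a.2 - a.1).val ≤ N)
    (hT2 : ∀ i j : ZMod N, i ≠ j → 2 * (j - i).val < N → (i, j) ∈ T)
    (hT3 : ∀ i j : ZMod N, 2 * (j - i).val = N → ((i, j) ∈ T ↔ (j, i) ∉ T))
    -- a valid partition of the requests into `W` nonempty parts, each of load at most 4
    (B : Fin W → Finset (ZMod N × ZMod N))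
    (hne : ∀ w, (B w).Nonempty)
    (hdisj : ∀ w w', w ≠ w' → Disjoint (B w) (B w'))
    (hcover : ∀ a : ZMod N × ZMod N, a ∈ T ↔ ∃ w, a ∈ B w)
    (hload : ∀ w, ∀ t : ZMod N, cload N (B w) t ≤ 4) :
    ((∑ w : Fin W, (verts N (B w)).card : ℕ) : ℚ)
      ≥ (7 : ℚ) / 32 * (N : ℚ) * ((N : ℚ) - 1) + (3 : ℚ) / 160 * ((N : ℚ) - 1) := by
  have : NeZero N := ⟨by omega⟩
  have hT := isTournament_of_shortest hT1 hT2 hT3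
  have hTB : T = univ.biUnion B := by ext a; simp [hcover a]
  have hB : ((univ : Finset (Fin W)) : Set (Fin W)).PairwiseDisjoint B :=
    fun w _ w' _ h => hdisj w w' h
  have hcard : 2 * T.card + N = N * N := by simpa using hT.two_mul_card_add_card
  have hW : N * N ≤ 8 * 4 * W + 1 := sq_le_of_partition hT1 hT hB hTB hload
  have hparts : ∑ w, (6 * (B w).card + 9) ≤ ∑ w, 15 * (verts N (B w)).card :=
    sum_le_sum fun w _ => six_mul_card_add_nine_le (hne w)
      (fun a ha h => hT.swap_notMem ((hcover a).mpr ⟨w, ha⟩) ((hcover _).mpr ⟨w, h⟩))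
      (hload w)
  rw [sum_add_distrib, ← mul_sum, ← mul_sum, ← card_biUnion hB, ← hTB] at hparts
  simp only [sum_const, card_univ, Fintype.card_fin, smul_eq_mul] at hparts
  rw [ge_iff_le]
  push_cast
  qify at hcard hW hparts
  linarith
end
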